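/- arXiv:2208.10457 — 6 statements merged into one kernel-verified Lean document; each statement's English description precedes it below -/
import Mathlib

section
/- Let G be a properly edge-coloured graph with n vertices and at least n·d edges, and let k be an integer with 1 ≤ k < d/8. Then G contains at least n·(d/4)^k labelled rainbow paths with k edges (a labelled rainbow path is a sequence of k+1 distinct vertices, consecutive ones adjacent, with all k edge colours distinct). -/
/-!
Deleting a vertex of degree less than `d / 2` lowers the degree sum by less than `d`, so
`∑ deg - d · #S` never decreases. Starting from `2nd - nd = nd` and deleting such vertices
while possible, we reach a vertex set `S` in which every vertex has at least `d / 2` neighbours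
and the degree sum is still at least `nd`; this sum counts the rainbow paths with one edge inside
`S`. A rainbow path with `i` edges inside `S` ending at `u` extends by every neighbour of `u` in
`S` except the `i + 1` vertices of the path and, as the colours at `u` are distinct, at most `i`
neighbours reached through an already used colour: at least `d / 2 - 2i - 1 ≥ d / 4` choices.
-/

open Finset Function

namespace SimpleGraph

variable {V K : Type*} (G : SimpleGraph V) (c : Sym2 V → K)

def IsProperEdgeColouring : Prop :=
  ∀ u v w : V, G.Adj u v → G.Adj u w → v ≠ w → c s(u, v) ≠ c s(u, w)

def IsRainbowPath {k : ℕ} (p : Fin (k + 1) → V) : Prop :=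
  Injective p ∧ (∀ i : Fin k, G.Adj (p i.castSucc) (p i.succ)) ∧
    Injective (fun i : Fin k => c s(p i.castSucc, p i.succ))

variable {G c}

lemma IsRainbowPath.snoc {k : ℕ} {p : Fin (k + 1) → V} (hp : G.IsRainbowPath c p) {v : V}
    (hadj : G.Adj (p (Fin.last k)) v) (hv : v ∉ Set.range p)
    (hcol : c s(p (Fin.last k), v) ∉ Set.range fun i : Fin k => c s(p i.castSucc, p i.succ)) :
    G.IsRainbowPath c (Fin.snoc p v : Fin (k + 2) → V) := by
  obtain ⟨hinj, hpadj, hpcol⟩ := hp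
  have hcolours : (fun i : Fin (k + 1) => c s((Fin.snoc p v : Fin (k + 2) → V) i.castSucc,
      (Fin.snoc p v : Fin (k + 2) → V) i.succ)) =
      Fin.snoc (fun i : Fin k => c s(p i.castSucc, p i.succ)) (c s(p (Fin.last k), v)) := by
    funext i
    induction i using Fin.lastCases with
    | last => simp only [Fin.succ_last, Fin.snoc_last, Fin.snoc_castSucc]
    | cast i => simp only [Fin.succ_castSucc, Fin.snoc_castSucc]
  refine ⟨Fin.snoc_injective_of_injective hinj hv, fun i => ?_, ?_⟩
  · induction i using Fin.lastCases with
    | last => simpa only [Fin.succ_last, Fin.snoc_last, Fin.snoc_castSucc] using hadj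
    | cast i => simpa only [Fin.succ_castSucc, Fin.snoc_castSucc] using hpadj i
  · rw [hcolours]
    exact Fin.snoc_injective_of_injective hpcol hcol

section DegreeIn

variable (G) [DecidableRel G.Adj]

def degreeIn (S : Finset V) (v : V) : ℕ := #{u ∈ S | G.Adj v u}

def sumDegreeIn (S : Finset V) : ℕ := ∑ v ∈ S, G.degreeIn S v

lemma sumDegreeIn_univ [Fintype V] : G.sumDegreeIn univ = 2 * #G.edgeFinset := by
  simp only [sumDegreeIn, degreeIn, ← neighborFinset_eq_filter, card_neighborFinset_eq_degree,
    sum_degrees_eq_twice_card_edges]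

variable {G} [DecidableEq V]

lemma degreeIn_eq_degreeIn_erase_add {S : Finset V} {v : V} (hv : v ∈ S) (u : V) :
    G.degreeIn S u = G.degreeIn (S.erase v) u + if G.Adj u v then 1 else 0 := by
  conv_lhs => rw [degreeIn, ← insert_erase hv, filter_insert]
  split_ifs with h
  · rw [card_insert_of_notMem (by simp), degreeIn]
  · rfl

lemma sumDegreeIn_le_sumDegreeIn_erase_add {S : Finset V} {v : V} (hv : v ∈ S) :
    G.sumDegreeIn S ≤ G.sumDegreeIn (S.erase v) + 2 * G.degreeIn S v := by
  have hback : ∑ u ∈ S.erase v, (if G.Adj u v then 1 else 0) ≤ G.degreeIn S v := by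
    rw [sum_boole, Nat.cast_id, degreeIn]
    exact card_le_card fun u hu => by
      simp only [mem_filter, mem_erase] at hu ⊢
      exact ⟨hu.1.2, hu.2.symm⟩
  calc G.sumDegreeIn S
      = G.degreeIn S v + ∑ u ∈ S.erase v, G.degreeIn S u := (add_sum_erase _ _ hv).symm
    _ = G.degreeIn S v + (G.sumDegreeIn (S.erase v) +
          ∑ u ∈ S.erase v, (if G.Adj u v then 1 else 0)) := by
        rw [sum_congr rfl fun u _ => degreeIn_eq_degreeIn_erase_add hv u, sum_add_distrib]; rfl
    _ ≤ G.sumDegreeIn (S.erase v) + 2 * G.degreeIn S v := by omega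

lemma exists_half_le_degreeIn {a d : ℝ} (S : Finset V) (hS : a + d * #S ≤ G.sumDegreeIn S) :
    ∃ T : Finset V, (∀ v ∈ T, d / 2 ≤ G.degreeIn T v) ∧ a + d * #T ≤ G.sumDegreeIn T := by
  induction S using Finset.strongInduction with
  | H S ih =>
    by_cases hmin : ∀ v ∈ S, d / 2 ≤ G.degreeIn S v
    · exact ⟨S, hmin, hS⟩
    simp only [not_forall, not_le] at hmin
    obtain ⟨v, hv, hlow⟩ := hmin
    refine ih _ (erase_ssubset hv) ?_
    have herase : (G.sumDegreeIn S : ℝ) ≤ G.sumDegreeIn (S.erase v) + 2 * G.degreeIn S v := by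
      exact_mod_cast sumDegreeIn_le_sumDegreeIn_erase_add hv
    rw [cast_card_erase_of_mem hv]
    linarith

lemma degreeIn_le_card_filter_notMem_add [DecidableEq K] (hc : G.IsProperEdgeColouring c)
    (S : Finset V) (u : V) (B : Finset V) (C : Finset K) :
    G.degreeIn S u ≤ #{v ∈ S | G.Adj u v ∧ v ∉ B ∧ c s(u, v) ∉ C} + #B + #C := by
  set N : Finset V := {v ∈ S | G.Adj u v}
  set good : Finset V := {v ∈ S | G.Adj u v ∧ v ∉ B ∧ c s(u, v) ∉ C}
  set clash : Finset V := {v ∈ N | c s(u, v) ∈ C}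
  have hclash : #clash ≤ #C := by
    refine card_le_card_of_injOn (fun v => c s(u, v)) (fun v hv => by simp_all [clash]) ?_
    intro v hv w hw hvw
    simp only [clash, N, mem_coe, mem_filter] at hv hw
    by_contra hne
    exact hc u v w hv.1.2 hw.1.2 hne hvw
  have hsub : N ⊆ good ∪ B ∪ clash := by
    intro v hv
    simp only [good, clash, N, mem_filter, mem_union] at hv ⊢
    tauto
  calc G.degreeIn S u = #N := rfl
    _ ≤ #(good ∪ B ∪ clash) := card_le_card hsub
    _ ≤ #good + #B + #clash := (card_union_le _ _).trans (by gcongr; exact card_union_le _ _)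
    _ ≤ #good + #B + #C := by omega

end DegreeIn

section RainbowPaths

variable [Fintype V]

variable (G c) in
open Classical in
noncomputable def rainbowPathsIn (S : Finset V) (k : ℕ) : Finset (Fin (k + 1) → V) :=
  {p | (∀ i, p i ∈ S) ∧ G.IsRainbowPath c p}

lemma mem_rainbowPathsIn {S : Finset V} {k : ℕ} {p : Fin (k + 1) → V} :
    p ∈ G.rainbowPathsIn c S k ↔ (∀ i, p i ∈ S) ∧ G.IsRainbowPath c p := by
  simp [rainbowPathsIn]

lemma card_rainbowPathsIn_le_natCard (S : Finset V) (k : ℕ) :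
    #(G.rainbowPathsIn c S k) ≤ Nat.card {p : Fin (k + 1) → V // G.IsRainbowPath c p} := by
  classical
  rw [Nat.card_eq_fintype_card, Fintype.card_subtype]
  exact card_le_card fun p hp => mem_filter.2 ⟨mem_univ _, (mem_rainbowPathsIn.1 hp).2⟩

variable [DecidableRel G.Adj]

lemma sumDegreeIn_le_card_rainbowPathsIn_one (S : Finset V) :
    G.sumDegreeIn S ≤ #(G.rainbowPathsIn c S 1) := by
  simp only [sumDegreeIn, degreeIn]
  rw [← card_sigma]
  refine card_le_card_of_injOn (fun x => ![x.1, x.2]) ?_ ?_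
  · rintro ⟨v, u⟩ hx
    simp only [coe_sigma, Set.mem_sigma_iff, mem_coe, mem_filter] at hx
    obtain ⟨hv, hu, hadj⟩ := hx
    rw [mem_coe, mem_rainbowPathsIn]
    refine ⟨fun i => ?_, fun i j hij => ?_, fun i => ?_, injective_of_subsingleton _⟩
    · fin_cases i <;> simpa
    · fin_cases i <;> fin_cases j <;> simp_all [hadj.ne]
    · fin_cases i; simpa using hadj
  · rintro ⟨v, u⟩ - ⟨v', u'⟩ - h
    have h0 := congrFun h 0
    have h1 := congrFun h 1
    simp only [Matrix.cons_val_zero, Matrix.cons_val_one] at h0 h1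
    simp [h0, h1]

variable [DecidableEq V]

lemma mul_card_rainbowPathsIn_le (hc : G.IsProperEdgeColouring c) {S : Finset V} {δ : ℝ}
    (hS : ∀ v ∈ S, δ ≤ G.degreeIn S v) (k : ℕ) :
    (δ - (2 * k + 1)) * #(G.rainbowPathsIn c S k) ≤ #(G.rainbowPathsIn c S (k + 1)) := by
  classical
  set colours : (Fin (k + 1) → V) → Fin k → K := fun q i => c s(q i.castSucc, q i.succ)
  set extensions : (Fin (k + 1) → V) → Finset V := fun q =>
    {v ∈ S | G.Adj (q (Fin.last k)) v ∧ v ∉ univ.image q ∧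
      c s(q (Fin.last k), v) ∉ univ.image (colours q)}
  have hfibre : ∀ q ∈ G.rainbowPathsIn c S k, δ - (2 * k + 1) ≤ #(extensions q) := by
    intro q hq
    have hB : #(univ.image q) ≤ k + 1 := card_image_le.trans (by simp)
    have hC : #(univ.image (colours q)) ≤ k := card_image_le.trans (by simp)
    have hext : G.degreeIn S (q (Fin.last k)) ≤ #(extensions q) + #(univ.image q) +
        #(univ.image (colours q)) :=
      degreeIn_le_card_filter_notMem_add hc S _ _ _
    have hdeg := hS _ ((mem_rainbowPathsIn.1 hq).1 (Fin.last k))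
    have : (G.degreeIn S (q (Fin.last k)) : ℝ) ≤ #(extensions q) + (k + 1) + k := by
      exact_mod_cast hext.trans (by omega)
    linarith
  have hinj :
      #((G.rainbowPathsIn c S k).sigma extensions) ≤ #(G.rainbowPathsIn c S (k + 1)) := by
    refine card_le_card_of_injOn (fun x => Fin.snoc x.1 x.2) ?_ ?_
    · rintro ⟨q, v⟩ hx
      simp only [coe_sigma, Set.mem_sigma_iff, mem_coe, mem_rainbowPathsIn] at hx ⊢
      obtain ⟨⟨hqS, hq⟩, hv⟩ := hx
      simp only [extensions, mem_filter, mem_image, mem_univ, true_and, not_exists] at hv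
      obtain ⟨hvS, hadj, hvq, hvc⟩ := hv
      refine ⟨fun i => ?_, hq.snoc hadj (by simpa [eq_comm] using hvq) ?_⟩
      · induction i using Fin.lastCases with
        | last => simpa using hvS
        | cast i => simpa using hqS i
      · rintro ⟨i, hi⟩; exact hvc i hi
    · rintro ⟨q, v⟩ - ⟨q', v'⟩ - h
      obtain ⟨rfl, rfl⟩ := Fin.snoc_injective2 h
      rfl
  calc (δ - (2 * k + 1)) * #(G.rainbowPathsIn c S k)
      ≤ ∑ q ∈ G.rainbowPathsIn c S k, (#(extensions q) : ℝ) := by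
        rw [mul_comm, ← nsmul_eq_mul]; exact card_nsmul_le_sum _ _ _ hfibre
    _ = #((G.rainbowPathsIn c S k).sigma extensions) := by rw [card_sigma]; push_cast; rfl
    _ ≤ #(G.rainbowPathsIn c S (k + 1)) := by exact_mod_cast hinj

lemma mul_pow_le_card_rainbowPathsIn (hc : G.IsProperEdgeColouring c) {S : Finset V} {a r : ℝ}
    (hr : 0 ≤ r) (hbase : a * r ≤ G.sumDegreeIn S) (k : ℕ)
    (hS : ∀ v ∈ S, r + (2 * k + 1) ≤ G.degreeIn S v) :
    a * r ^ (k + 1) ≤ #(G.rainbowPathsIn c S (k + 1)) := by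
  induction k with
  | zero =>
    simpa using hbase.trans (by exact_mod_cast sumDegreeIn_le_card_rainbowPathsIn_one S)
  | succ k ih =>
    have hstep := mul_card_rainbowPathsIn_le hc (δ := r + (2 * (k + 1 : ℕ) + 1))
      (by exact_mod_cast hS) (k + 1)
    have hprev := ih fun v hv => by push_cast at hS; linarith [hS v hv]
    calc a * r ^ (k + 1 + 1) = r * (a * r ^ (k + 1)) := by ring
      _ ≤ r * #(G.rainbowPathsIn c S (k + 1)) := mul_le_mul_of_nonneg_left hprev hr
      _ ≤ _ := by simpa using hstep

end RainbowPaths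

end SimpleGraph

open SimpleGraph in
/-- A properly edge-coloured graph with `n` vertices and at least `n·d` edges,
with `1 ≤ k < d/8`, contains at least `n·(d/4)^k` labelled rainbow paths with `k` edges. -/
theorem stmt_1 {V K : Type*} [Fintype V]
    (G : SimpleGraph V) (c : Sym2 V → K)
    (hproper : ∀ u v w : V, G.Adj u v → G.Adj u w → v ≠ w → c s(u, v) ≠ c s(u, w))
    (n : ℕ) (hn : n = Fintype.card V) (d : ℝ)
    (hedges : (n : ℝ) * d ≤ Nat.card G.edgeSet)
    (k : ℕ) (hk1 : 1 ≤ k) (hk2 : (k : ℝ) < d / 8) :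
    (n : ℝ) * (d / 4) ^ k ≤
      Nat.card {p : Fin (k + 1) → V //
        Function.Injective p ∧
        (∀ i : Fin k, G.Adj (p i.castSucc) (p i.succ)) ∧
        Function.Injective (fun i : Fin k => c s(p i.castSucc, p i.succ))} := by
  classical
  obtain ⟨j, rfl⟩ : ∃ j, k = j + 1 := ⟨k - 1, by omega⟩
  push_cast at hk2
  have hd : 0 ≤ d := by linarith [(j.cast_nonneg : (0 : ℝ) ≤ j)]
  have hcore : n * d + d * #(univ : Finset V) ≤ G.sumDegreeIn univ := by
    rw [sumDegreeIn_univ, card_univ, ← hn, edgeFinset_card, ← Nat.card_eq_fintype_card]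
    push_cast
    linarith
  obtain ⟨S, hSdeg, hS⟩ := exists_half_le_degreeIn univ hcore
  have hbase : n * (d / 4) ≤ G.sumDegreeIn S := by
    nlinarith [(n.cast_nonneg : (0 : ℝ) ≤ n), ((#S).cast_nonneg : (0 : ℝ) ≤ #S)]
  calc (n : ℝ) * (d / 4) ^ (j + 1)
      ≤ #(G.rainbowPathsIn c S (j + 1)) :=
        mul_pow_le_card_rainbowPathsIn hproper (by positivity) hbase j
          fun v hv => by linarith [hSdeg v hv]
    _ ≤ _ := by exact_mod_cast card_rainbowPathsIn_le_natCard S (j + 1)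
end

section
/- Let G be a graph with a proper edge colouring. Let A_1 ∪ ... ∪ A_{2k} be a partition of the vertex set and B_1 ∪ ... ∪ B_{2k} a partition of the colour set. Suppose C_1, ..., C_t is a nice sequence of labelled rainbow 2k-cycles such that for all i and ℓ, the ℓ-th vertex of C_i lies in A_ℓ and the colour of the ℓ-th edge of C_i lies in B_ℓ, and C'_1, ..., C'_t is another sequence with the same property. Assume the two sequences of cycles use the same set of colours. Then if some vertex belongs to both C_i and C'_j, the cycles C_i and C'_j are identical as labelled cycles. -/
/-- Lemma on nice sequences of labelled rainbow 2k-cycles: if two nice sequences respect the same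
vertex partition `A` and colour partition `B` (indexed by position along the cycle), use the same
set of colours, and some vertex belongs to a cycle of each sequence, then those two cycles are
identical as labelled cycles. -/
theorem stmt_2 {V K : Type*} (k t : ℕ) (hk : 2 ≤ k)
    (G : SimpleGraph V) (c : Sym2 V → K)
    (hproper : ∀ u v w : V, G.Adj u v → G.Adj u w → v ≠ w → c s(u, v) ≠ c s(u, w))
    (A : V → ZMod (2 * k)) (B : K → ZMod (2 * k))
    (C C' : Fin t → ZMod (2 * k) → V)
    -- each `C i` (resp. `C' i`) is a labelled rainbow 2k-cycle
    (hC : ∀ i, Function.Injective (C i) ∧ (∀ ℓ, G.Adj (C i ℓ) (C i (ℓ + 1))) ∧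
      Function.Injective (fun ℓ => c s(C i ℓ, C i (ℓ + 1))))
    (hC' : ∀ i, Function.Injective (C' i) ∧ (∀ ℓ, G.Adj (C' i ℓ) (C' i (ℓ + 1))) ∧
      Function.Injective (fun ℓ => c s(C' i ℓ, C' i (ℓ + 1))))
    -- the sequences are nice: for `i ≠ j`, no vertex of the `i`-th cycle is incident to an
    -- edge of `G` whose colour appears on the `j`-th cycle
    (hnice : ∀ i j, i ≠ j → ∀ ℓ ℓ' u, G.Adj (C i ℓ) u →
      c s(C i ℓ, u) ≠ c s(C j ℓ', C j (ℓ' + 1)))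
    (hnice' : ∀ i j, i ≠ j → ∀ ℓ ℓ' u, G.Adj (C' i ℓ) u →
      c s(C' i ℓ, u) ≠ c s(C' j ℓ', C' j (ℓ' + 1)))
    -- the ℓ-th vertex lies in the part `A_ℓ` and the ℓ-th edge colour lies in `B_ℓ`
    (hA : ∀ i ℓ, A (C i ℓ) = ℓ) (hA' : ∀ i ℓ, A (C' i ℓ) = ℓ)
    (hB : ∀ i ℓ, B (c s(C i ℓ, C i (ℓ + 1))) = ℓ)
    (hB' : ∀ i ℓ, B (c s(C' i ℓ, C' i (ℓ + 1))) = ℓ)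
    -- the two sequences use the same set of colours
    (hcolours : {x : K | ∃ i ℓ, c s(C i ℓ, C i (ℓ + 1)) = x} =
      {x : K | ∃ i ℓ, c s(C' i ℓ, C' i (ℓ + 1)) = x})
    (i j : Fin t) (ℓ ℓ' : ZMod (2 * k)) (hshare : C i ℓ = C' j ℓ') :
    C i = C' j := by
  haveI : NeZero (2 * k) := ⟨by omega⟩
  -- the shared vertex sits at the same position
  have hpos : ℓ' = ℓ := by
    have h1 := hA i ℓ
    rw [hshare, hA' j ℓ'] at h1
    exact h1
  rw [hpos] at hshare
  -- key step: equality at one position propagates to the next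
  have step : ∀ m : ZMod (2 * k), C i m = C' j m → C i (m + 1) = C' j (m + 1) := by
    intro m hm
    obtain ⟨-, hCadj, -⟩ := hC i
    obtain ⟨-, hC'adj, -⟩ := hC' j
    have hx : c s(C i m, C i (m + 1)) ∈ {x : K | ∃ i ℓ, c s(C i ℓ, C i (ℓ + 1)) = x} :=
      ⟨i, m, rfl⟩
    rw [hcolours] at hx
    obtain ⟨j', m', hcol⟩ := hx
    have hb : m = m' := by
      have hb := hB' j' m'
      rw [hcol, hB i m] at hb
      exact hb
    rw [← hb] at hcol
    have hjj : j' = j := by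
      by_contra hne
      have hadj : G.Adj (C' j m) (C i (m + 1)) := by rw [← hm]; exact hCadj m
      exact hnice' j j' (Ne.symm hne) m m (C i (m + 1)) hadj
        (by rw [← hm]; exact hcol.symm)
    rw [hjj] at hcol
    by_contra hne
    have h1 : G.Adj (C i m) (C i (m + 1)) := hCadj m
    have h2 : G.Adj (C i m) (C' j (m + 1)) := by rw [hm]; exact hC'adj m
    refine hproper (C i m) (C i (m + 1)) (C' j (m + 1)) h1 h2 hne ?_
    conv_rhs => rw [hm]
    exact hcol.symm
  have key : ∀ n : ℕ, C i (ℓ + n) = C' j (ℓ + n) := by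
    intro n
    induction n with
    | zero => simpa using hshare
    | succ n ih =>
      have hc : ((n + 1 : ℕ) : ZMod (2 * k)) = (n : ZMod (2 * k)) + 1 := by push_cast; ring
      rw [hc, ← add_assoc]
      exact step _ ih
  funext m
  have hm : m = ℓ + ((m - ℓ).val : ZMod (2 * k)) := by
    rw [ZMod.natCast_val, ZMod.cast_id]; ring
  rw [hm]
  exact key (m - ℓ).val
end

section
/- Let P_1, ..., P_t and P'_1, ..., P'_t be two sequences of (k,q)-nice paths in an edge-coloured graph G such that the set of endpoints of the paths in the first sequence equals the set of endpoints of the paths in the second sequence. If some vertex v is an internal vertex of both P_i and P'_j, then P_i and P'_j have the same pair of endpoints. -/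
/-- A sequence of labelled paths `P 0, …, P (t-1)` (each given as a function `Fin (k+1) → V`)
is `(k,q)`-nice if: each path has `k` edges (is injective with consecutive vertices adjacent);
each colour appears at most once on the union of the paths; for `i ≠ j` every walk in `G`
between a vertex of `P i` and a vertex of `P j` has length greater than `k - 1`; and the number
of homomorphic copies of the cycle `C_{2k}` extending each `P i` is at most `q`. -/
def KQNicePaths {V K : Type*} (G : SimpleGraph V) (c : Sym2 V → K)
    (k : ℕ) (q : ℝ) {t : ℕ} (P : Fin t → Fin (k + 1) → V) : Prop :=
  (∀ i, Function.Injective (P i) ∧ ∀ ℓ : Fin k, G.Adj (P i ℓ.castSucc) (P i ℓ.succ)) ∧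
  (∀ i j (ℓ m : Fin k),
      c s(P i ℓ.castSucc, P i ℓ.succ) = c s(P j m.castSucc, P j m.succ) →
      s(P i ℓ.castSucc, P i ℓ.succ) = s(P j m.castSucc, P j m.succ)) ∧
  (∀ i j, i ≠ j → ∀ (ℓ m : Fin (k + 1)) (w : G.Walk (P i ℓ) (P j m)), k - 1 < w.length) ∧
  (∀ i, (Nat.card {f : ZMod (2 * k) → V //
      (∀ x, G.Adj (f x) (f (x + 1))) ∧
      ∀ ℓ : Fin (k + 1), f ((ℓ : ℕ) : ZMod (2 * k)) = P i ℓ} : ℝ) ≤ q)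

/-- Along a labelled path there is a walk between any two of its vertices of the
appropriate length. -/
lemma exists_walk_along {V : Type*} (G : SimpleGraph V) {k : ℕ} (f : Fin (k + 1) → V)
    (hadj : ∀ ℓ : Fin k, G.Adj (f ℓ.castSucc) (f ℓ.succ)) :
    ∀ b (hb : b ≤ k) a (hab : a ≤ b),
      ∃ w : G.Walk (f ⟨a, by omega⟩) (f ⟨b, by omega⟩), w.length = b - a := by
  intro b
  induction b with
  | zero =>
    intro hb a hab
    have : a = 0 := by omega
    subst this
    exact ⟨.nil, rfl⟩
  | succ b ih =>
    intro hb a hab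
    rcases Nat.eq_or_lt_of_le hab with h | h
    · subst h
      exact ⟨.nil, by simp⟩
    · obtain ⟨w, hw⟩ := ih (by omega) a (by omega)
      have hadj' : G.Adj (f ⟨b, by omega⟩) (f ⟨b + 1, by omega⟩) := hadj ⟨b, by omega⟩
      exact ⟨w.concat hadj', by rw [SimpleGraph.Walk.length_concat, hw]; omega⟩

/-- If two `(k,q)`-nice sequences of paths have the same set of endpoints, and some vertex `v`
is an internal vertex of both `P i` and `P' j`, then `P i` and `P' j` have the same pair
of endpoints. -/
theorem stmt_3 {V K : Type*} (G : SimpleGraph V) (c : Sym2 V → K)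
    (k t : ℕ) (q : ℝ) (P P' : Fin t → Fin (k + 1) → V)
    (hP : KQNicePaths G c k q P) (hP' : KQNicePaths G c k q P')
    (hends : {x : V | ∃ i, x = P i 0 ∨ x = P i (Fin.last k)} =
      {x : V | ∃ i, x = P' i 0 ∨ x = P' i (Fin.last k)})
    (v : V) (i j : Fin t)
    (hv : ∃ ℓ : Fin (k + 1), ℓ ≠ 0 ∧ ℓ ≠ Fin.last k ∧ P i ℓ = v)
    (hv' : ∃ m : Fin (k + 1), m ≠ 0 ∧ m ≠ Fin.last k ∧ P' j m = v) :
    s(P i 0, P i (Fin.last k)) = s(P' j 0, P' j (Fin.last k)) := by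
  obtain ⟨ℓ, hℓ0, hℓk, hℓv⟩ := hv
  obtain ⟨m, hm0, hmk, hmv⟩ := hv'
  have hm1 : 1 ≤ (m : ℕ) := by
    rcases Nat.eq_zero_or_pos (m : ℕ) with h | h
    · exact absurd (Fin.ext h) hm0
    · exact h
  have hmk' : (m : ℕ) < k := by
    have h1 : (m : ℕ) < k + 1 := m.isLt
    have h2 : (m : ℕ) ≠ k := fun h => hmk (Fin.ext (by simp [h]))
    omega
  have hk2 : 2 ≤ k := by omega
  have hdist := hP.2.2.1
  have key : ∀ e : Fin (k + 1), (e = 0 ∨ e = Fin.last k) →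
      P' j e = P i 0 ∨ P' j e = P i (Fin.last k) := by
    intro e he
    have hmem : P' j e ∈ {x : V | ∃ i, x = P' i 0 ∨ x = P' i (Fin.last k)} := by
      refine ⟨j, ?_⟩
      rcases he with h | h <;> subst h
      · exact Or.inl rfl
      · exact Or.inr rfl
    rw [← hends] at hmem
    obtain ⟨i', hi'⟩ := hmem
    -- build a short walk from `P' j e` to `v = P i ℓ`
    have hwalk : ∃ w : G.Walk (P' j e) (P i ℓ), w.length ≤ k - 1 := by
      have hadj' := (hP'.1 j).2
      rcases he with rfl | rfl
      · obtain ⟨w, hw⟩ := exists_walk_along G (P' j) hadj' (m : ℕ) (by omega) 0 (by omega)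
        refine ⟨w.copy (congrArg (P' j) (Fin.ext (by simp)))
          (by rw [show (⟨(m : ℕ), by omega⟩ : Fin (k + 1)) = m from Fin.eta m m.isLt,
                hmv, ← hℓv]), ?_⟩
        rw [SimpleGraph.Walk.length_copy]
        omega
      · obtain ⟨w, hw⟩ := exists_walk_along G (P' j) hadj' k (le_refl k) (m : ℕ) (by omega)
        refine ⟨w.reverse.copy (congrArg (P' j) (Fin.ext (by simp)))
          (by rw [show (⟨(m : ℕ), by omega⟩ : Fin (k + 1)) = m from Fin.eta m m.isLt,
                hmv, ← hℓv]), ?_⟩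
        rw [SimpleGraph.Walk.length_copy, SimpleGraph.Walk.length_reverse]
        omega
    obtain ⟨w, hw⟩ := hwalk
    have hii : i' = i := by
      by_contra hne
      rcases hi' with h | h
      · have hlt := hdist i' i hne 0 ℓ (w.copy h rfl)
        rw [SimpleGraph.Walk.length_copy] at hlt
        omega
      · have hlt := hdist i' i hne (Fin.last k) ℓ (w.copy h rfl)
        rw [SimpleGraph.Walk.length_copy] at hlt
        omega
    subst hii
    exact hi'
  have h0 := key 0 (Or.inl rfl)
  have h1 := key (Fin.last k) (Or.inr rfl)
  have hne01 : P' j 0 ≠ P' j (Fin.last k) := by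
    intro h
    have h2 := (hP'.1 j).1 h
    have h3 : (0 : ℕ) = k := by simpa [Fin.ext_iff] using h2
    omega
  rcases h0 with h0 | h0 <;> rcases h1 with h1 | h1
  · exact absurd (h0.trans h1.symm) hne01
  · rw [h0, h1]
  · rw [h0, h1, Sym2.eq_swap]
  · exact absurd (h0.trans h1.symm) hne01
end

section
/- Let G be a μ-balanced k-partite linear k-uniform hypergraph on n vertices with vertex classes X_1, ..., X_k satisfying |X_1| ≤ ... ≤ |X_k|, and let t be a positive integer with t ≤ |X_1|/(2kμ) + 1. Then G contains at least (e(G)/(2t))^t matchings of size t. -/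
open Classical in
/-- Ordered partial matchings: sequences of `s` edges of `E`, pairwise disjoint. -/
noncomputable def ordMatch {V : Type*} [Fintype V] [DecidableEq V]
    (E : Finset (Finset V)) (s : ℕ) : Finset (Fin s → Finset V) :=
  Finset.univ.filter (fun g => (∀ i, g i ∈ E) ∧ ∀ i j, i ≠ j → Disjoint (g i) (g j))

lemma mem_ordMatch {V : Type*} [Fintype V] [DecidableEq V]
    {E : Finset (Finset V)} {s : ℕ} {g : Fin s → Finset V} :
    g ∈ ordMatch E s ↔ (∀ i, g i ∈ E) ∧ ∀ i j, i ≠ j → Disjoint (g i) (g j) := by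
  simp [ordMatch]

/-- Let `G` be a μ-balanced k-partite linear k-uniform hypergraph with vertex classes
`X 0, …, X (k-1)` of non-decreasing sizes, and let `t` be a positive integer with
`t ≤ |X 0|/(2kμ) + 1`. Then `G` contains at least `(e(G)/(2t))^t` matchings of size `t`. -/
theorem stmt_5 {V : Type*} [Fintype V] [DecidableEq V] (k : ℕ) (hk : 1 ≤ k)
    (E : Finset (Finset V)) (X : Fin k → Finset V) (μ : ℝ) (t : ℕ)
    (hdisj : ∀ i j, i ≠ j → Disjoint (X i) (X j))
    (hcover : ∀ v : V, ∃ i, v ∈ X i)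
    (hpartite : ∀ e ∈ E, ∀ i, (e ∩ X i).card = 1)
    (hlinear : ∀ e ∈ E, ∀ f ∈ E, e ≠ f → (e ∩ f).card ≤ 1)
    (hbal : ∀ i, ∀ w ∈ X i, ((E.filter (fun e => w ∈ e)).card : ℝ) ≤ μ * E.card / (X i).card)
    (hmono : ∀ i j : Fin k, i ≤ j → (X i).card ≤ (X j).card)
    (ht : 1 ≤ t) (ht2 : (t : ℝ) ≤ ((X ⟨0, by omega⟩).card : ℝ) / (2 * k * μ) + 1) :
    ((E.card : ℝ) / (2 * t)) ^ t ≤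
      Nat.card {M : Finset (Finset V) // M ⊆ E ∧ M.card = t ∧
        ∀ e ∈ M, ∀ f ∈ M, e ≠ f → Disjoint e f} := by
  classical
  set i0 : Fin k := ⟨0, by omega⟩ with hi0
  -- trivial case: no edges
  rcases E.eq_empty_or_nonempty with hEe | hEne
  · subst hEe
    simp only [Finset.card_empty, Nat.cast_zero, zero_div, zero_pow (by omega : t ≠ 0)]
    positivity
  obtain ⟨e0, he0⟩ := hEne
  have hEpos : (0:ℝ) < E.card := by
    exact_mod_cast Finset.card_pos.mpr ⟨e0, he0⟩
  -- edges are nonempty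
  have hene : ∀ e ∈ E, e.Nonempty := by
    intro e he
    have h1 := hpartite e he i0
    obtain ⟨w, hw⟩ := Finset.card_pos.mp (by omega : 0 < (e ∩ X i0).card)
    exact ⟨w, (Finset.mem_inter.mp hw).1⟩
  -- X i0 is nonempty
  have hX0pos : (0:ℝ) < (X i0).card := by
    have h1 := hpartite e0 he0 i0
    obtain ⟨w, hw⟩ := Finset.card_pos.mp (by omega : 0 < (e0 ∩ X i0).card)
    exact_mod_cast Finset.card_pos.mpr ⟨w, (Finset.mem_inter.mp hw).2⟩
  -- μ is positive
  have hμpos : (0:ℝ) < μ := by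
    have h1 := hpartite e0 he0 i0
    obtain ⟨w, hw⟩ := Finset.card_pos.mp (by omega : 0 < (e0 ∩ X i0).card)
    obtain ⟨hwe, hwX⟩ := Finset.mem_inter.mp hw
    have hb := hbal i0 w hwX
    have hd : (1:ℝ) ≤ ((E.filter (fun e => w ∈ e)).card : ℝ) := by
      exact_mod_cast Finset.card_pos.mpr ⟨e0, Finset.mem_filter.mpr ⟨he0, hwe⟩⟩
    have h2 : (0:ℝ) < μ * E.card / (X i0).card := lt_of_lt_of_le one_pos (hd.trans hb)
    rcases div_pos_iff.mp h2 with ⟨h3, _⟩ | ⟨_, h4⟩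
    · nlinarith
    · linarith
  -- uniform degree bound
  have hdeg : ∀ w : V, ((E.filter (fun e => w ∈ e)).card : ℝ) ≤ μ * E.card / (X i0).card := by
    intro w
    obtain ⟨i, hwX⟩ := hcover w
    have h1 := hbal i w hwX
    have hXipos : (0:ℝ) < (X i).card := by
      exact_mod_cast Finset.card_pos.mpr ⟨w, hwX⟩
    have h2 : ((X i0).card : ℝ) ≤ (X i).card := by
      exact_mod_cast hmono i0 i (by simp [hi0, Fin.le_def])
    calc ((E.filter (fun e => w ∈ e)).card : ℝ) ≤ μ * E.card / (X i).card := h1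
      _ ≤ μ * E.card / (X i0).card :=
        div_le_div_of_nonneg_left (by positivity) hX0pos h2
  -- edges have exactly k vertices
  have hecard : ∀ e ∈ E, e.card = k := by
    intro e he
    have heq : e = Finset.univ.biUnion (fun i : Fin k => e ∩ X i) := by
      ext v
      simp only [Finset.mem_biUnion, Finset.mem_univ, true_and, Finset.mem_inter]
      constructor
      · intro hv; obtain ⟨i, hi⟩ := hcover v; exact ⟨i, hv, hi⟩
      · rintro ⟨i, hv, _⟩; exact hv
    rw [heq, Finset.card_biUnion]
    · simp [hpartite e he]
    · intro i _ j _ hij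
      exact Finset.disjoint_left.mpr fun v hv1 hv2 =>
        (Finset.disjoint_left.mp (hdisj i j hij)) (Finset.mem_inter.mp hv1).2
          (Finset.mem_inter.mp hv2).2
  -- neighbourhood bound for a single edge
  have hnb : ∀ f ∈ E, ((E.filter (fun e => ¬ Disjoint e f)).card : ℝ)
      ≤ k * (μ * E.card / (X i0).card) := by
    intro f hf
    have hsub : E.filter (fun e => ¬ Disjoint e f) ⊆
        f.biUnion (fun w => E.filter (fun e => w ∈ e)) := by
      intro e he
      obtain ⟨heE, hnd⟩ := Finset.mem_filter.mp he
      obtain ⟨w, hwe, hwf⟩ := Finset.not_disjoint_iff.mp hnd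
      exact Finset.mem_biUnion.mpr ⟨w, hwf, Finset.mem_filter.mpr ⟨heE, hwe⟩⟩
    calc ((E.filter (fun e => ¬ Disjoint e f)).card : ℝ)
        ≤ ((f.biUnion (fun w => E.filter (fun e => w ∈ e))).card : ℝ) := by
          exact_mod_cast Finset.card_le_card hsub
      _ ≤ ∑ w ∈ f, ((E.filter (fun e => w ∈ e)).card : ℝ) := by
          exact_mod_cast Finset.card_biUnion_le
      _ ≤ ∑ w ∈ f, (μ * E.card / (X i0).card) := Finset.sum_le_sum fun w _ => hdeg w
      _ = k * (μ * E.card / (X i0).card) := by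
          rw [Finset.sum_const, hecard f hf]; simp
  -- key: after fixing fewer than t edges, at least half the edges remain available
  have hAvail : ∀ s : ℕ, s + 1 ≤ t → ∀ g : Fin s → Finset V, (∀ i, g i ∈ E) →
      (E.card : ℝ) / 2 ≤ ((E.filter (fun e => ∀ i, Disjoint e (g i))).card : ℝ) := by
    intro s hst g hg
    have hsub : E \ E.filter (fun e => ∀ i, Disjoint e (g i)) ⊆
        (Finset.univ : Finset (Fin s)).biUnion
          (fun i => E.filter (fun e => ¬ Disjoint e (g i))) := by
      intro e he
      obtain ⟨heE, hne⟩ := Finset.mem_sdiff.mp he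
      have : ¬ ∀ i, Disjoint e (g i) := fun h => hne (Finset.mem_filter.mpr ⟨heE, h⟩)
      push_neg at this
      obtain ⟨i, hi⟩ := this
      exact Finset.mem_biUnion.mpr ⟨i, Finset.mem_univ i, Finset.mem_filter.mpr ⟨heE, hi⟩⟩
    have hdiff : ((E \ E.filter (fun e => ∀ i, Disjoint e (g i))).card : ℝ)
        ≤ s * (k * (μ * E.card / (X i0).card)) := by
      calc ((E \ E.filter (fun e => ∀ i, Disjoint e (g i))).card : ℝ)
          ≤ (((Finset.univ : Finset (Fin s)).biUnion
              (fun i => E.filter (fun e => ¬ Disjoint e (g i)))).card : ℝ) := by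
            exact_mod_cast Finset.card_le_card hsub
        _ ≤ ∑ i : Fin s, ((E.filter (fun e => ¬ Disjoint e (g i))).card : ℝ) := by
            exact_mod_cast Finset.card_biUnion_le
        _ ≤ ∑ _i : Fin s, (k * (μ * E.card / (X i0).card)) :=
            Finset.sum_le_sum fun i _ => hnb (g i) (hg i)
        _ = s * (k * (μ * E.card / (X i0).card)) := by simp [mul_comm]
    have hkey : (s : ℝ) * (k * (μ * E.card / (X i0).card)) ≤ E.card / 2 := by
      have hs : (s : ℝ) ≤ (t : ℝ) - 1 := by
        have : (s:ℝ) + 1 ≤ t := by exact_mod_cast hst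
        linarith
      have ht2' : ((t : ℝ) - 1) * (2 * k * μ) ≤ (X i0).card := by
        have hkpos : (0:ℝ) < (k:ℝ) := by exact_mod_cast hk
        have h2kμ : (0:ℝ) < 2 * k * μ := by positivity
        have := (le_div_iff₀ h2kμ).mp (by linarith [ht2] : (t:ℝ) - 1 ≤ ((X i0).card : ℝ) / (2 * k * μ))
        linarith
      have hkpos : (0:ℝ) < (k:ℝ) := by exact_mod_cast hk
      have hs0 : (0:ℝ) ≤ (s:ℝ) := by positivity
      have h5 : (s:ℝ) * (2 * k * μ) ≤ (X i0).card := le_trans (mul_le_mul_of_nonneg_right hs (by positivity)) ht2'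
      have h6 : (s:ℝ) * (2 * k * μ) * E.card ≤ ((X i0).card : ℝ) * E.card :=
        mul_le_mul_of_nonneg_right h5 hEpos.le
      have hexp : (s:ℝ) * (k * (μ * E.card / (X i0).card))
          = ((s:ℝ) * k * μ * E.card) / (X i0).card := by ring
      rw [hexp, div_le_div_iff₀ hX0pos (by norm_num : (0:ℝ) < 2)]
      nlinarith [h6]
    have hcards : ((E \ E.filter (fun e => ∀ i, Disjoint e (g i))).card : ℝ)
        = E.card - (E.filter (fun e => ∀ i, Disjoint e (g i))).card := by
      rw [Finset.card_sdiff_of_subset (Finset.filter_subset _ _)]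
      exact Nat.cast_sub (Finset.card_filter_le E _)
    linarith [hdiff, hkey, hcards]
  -- the ordered matchings count grows by a factor E/2 at each step
  have hOrd : ∀ s : ℕ, s ≤ t → ((E.card : ℝ) / 2) ^ s ≤ ((ordMatch E s).card : ℝ) := by
    intro s
    induction s with
    | zero =>
      intro _
      have : (fun i : Fin 0 => i.elim0) ∈ ordMatch E 0 :=
        mem_ordMatch.mpr ⟨fun i => i.elim0, fun i => i.elim0⟩
      have h1 : 1 ≤ (ordMatch E 0).card := Finset.card_pos.mpr ⟨_, this⟩
      simpa using (by exact_mod_cast h1 : (1:ℝ) ≤ ((ordMatch E 0).card : ℝ))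
    | succ s ih =>
      intro hst
      have ihs := ih (by omega)
      -- fiberwise counting over restriction
      have hmap : ∀ h ∈ ordMatch E (s+1), Fin.init h ∈ ordMatch E s := by
        intro h hh
        obtain ⟨h1, h2⟩ := mem_ordMatch.mp hh
        exact mem_ordMatch.mpr ⟨fun i => h1 _, fun i j hij =>
          h2 _ _ (fun hc => hij (Fin.castSucc_injective s hc))⟩
      have hcardsum := Finset.card_eq_sum_card_fiberwise hmap
      -- each fiber is at least as big as the available set
      have hfiber : ∀ g ∈ ordMatch E s,
          (E.card : ℝ) / 2 ≤ (((ordMatch E (s+1)).filter (fun h => Fin.init h = g)).card : ℝ) := by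
        intro g hg
        obtain ⟨hg1, hg2⟩ := mem_ordMatch.mp hg
        have hinj : Set.InjOn (fun e : Finset V => (Fin.snoc g e : Fin (s+1) → Finset V))
            ↑(E.filter (fun e => ∀ i, Disjoint e (g i))) := by
          intro a _ b _ hab
          have := congrFun hab (Fin.last s)
          simpa [Fin.snoc_last] using this
        have hmaps : ∀ e ∈ E.filter (fun e => ∀ i, Disjoint e (g i)),
            (Fin.snoc g e : Fin (s+1) → Finset V) ∈
              (ordMatch E (s+1)).filter (fun h => Fin.init h = g) := by
          intro e he
          obtain ⟨heE, hed⟩ := Finset.mem_filter.mp he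
          refine Finset.mem_filter.mpr ⟨mem_ordMatch.mpr ⟨?_, ?_⟩, Fin.init_snoc ..⟩
          · intro i
            refine Fin.lastCases ?_ ?_ i
            · simpa [Fin.snoc_last] using heE
            · intro j; simpa [Fin.snoc_castSucc] using hg1 j
          · intro i j
            induction i using Fin.lastCases with
            | last =>
              induction j using Fin.lastCases with
              | last => intro hij; exact absurd rfl hij
              | cast j' =>
                intro _
                simp only [Fin.snoc_last, Fin.snoc_castSucc]
                exact hed j'
            | cast i' =>
              induction j using Fin.lastCases with
              | last =>
                intro _
                simp only [Fin.snoc_last, Fin.snoc_castSucc]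
                exact (hed i').symm
              | cast j' =>
                intro hij
                have hne : i' ≠ j' := fun hc => hij (by rw [hc])
                simp only [Fin.snoc_castSucc]
                exact hg2 i' j' hne
        have hle := Finset.card_le_card_of_injOn _ hmaps hinj
        calc (E.card : ℝ) / 2
            ≤ ((E.filter (fun e => ∀ i, Disjoint e (g i))).card : ℝ) :=
              hAvail s hst g hg1
          _ ≤ _ := by exact_mod_cast hle
      calc ((E.card : ℝ) / 2) ^ (s+1) = ((E.card : ℝ) / 2) ^ s * ((E.card : ℝ) / 2) := by ring
        _ ≤ ((ordMatch E s).card : ℝ) * ((E.card : ℝ) / 2) := by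
            have : (0:ℝ) ≤ (E.card : ℝ) / 2 := by positivity
            nlinarith [pow_nonneg (by positivity : (0:ℝ) ≤ (E.card:ℝ)/2) s]
        _ = ∑ g ∈ ordMatch E s, (E.card : ℝ) / 2 := by
            rw [Finset.sum_const]; ring
        _ ≤ ∑ g ∈ ordMatch E s,
              (((ordMatch E (s+1)).filter (fun h => Fin.init h = g)).card : ℝ) :=
            Finset.sum_le_sum hfiber
        _ = ((ordMatch E (s+1)).card : ℝ) := by
            rw [hcardsum]; push_cast; rfl
  -- now relate unordered matchings to ordered ones
  set S : Finset (Finset (Finset V)) :=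
    Finset.univ.filter (fun M => M ⊆ E ∧ M.card = t ∧
      ∀ e ∈ M, ∀ f ∈ M, e ≠ f → Disjoint e f) with hS
  have hNatcard : Nat.card {M : Finset (Finset V) // M ⊆ E ∧ M.card = t ∧
      ∀ e ∈ M, ∀ f ∈ M, e ≠ f → Disjoint e f} = S.card := by
    rw [Nat.card_eq_fintype_card, hS]
    convert Fintype.card_subtype _
  -- map ordered matchings to their image
  have hφ : ∀ g ∈ ordMatch E t, Finset.image g Finset.univ ∈ S := by
    intro g hg
    obtain ⟨hg1, hg2⟩ := mem_ordMatch.mp hg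
    have hginj : Function.Injective g := by
      intro i j hij
      by_contra hne
      have hd := hg2 i j hne
      rw [hij] at hd
      exact (hene (g j) (hg1 j)).ne_empty (by simpa using disjoint_self.mp hd)
    refine Finset.mem_filter.mpr ⟨Finset.mem_univ _, ?_, ?_, ?_⟩
    · intro e he
      obtain ⟨i, _, rfl⟩ := Finset.mem_image.mp he
      exact hg1 i
    · rw [Finset.card_image_of_injective _ hginj, Finset.card_univ, Fintype.card_fin]
    · intro e he f hf hef
      obtain ⟨i, _, rfl⟩ := Finset.mem_image.mp he
      obtain ⟨j, _, rfl⟩ := Finset.mem_image.mp hf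
      exact hg2 i j (fun hc => hef (by rw [hc]))
  have hcardsum2 := Finset.card_eq_sum_card_fiberwise hφ
  -- each fiber has at most t^t elements
  have hfiber2 : ∀ M ∈ S, ((ordMatch E t).filter
      (fun g => Finset.image g Finset.univ = M)).card ≤ t ^ t := by
    intro M hM
    obtain ⟨_, hME, hMc, hMd⟩ := Finset.mem_filter.mp hM
    have hsub : (ordMatch E t).filter (fun g => Finset.image g Finset.univ = M) ⊆
        Fintype.piFinset (fun _ : Fin t => M) := by
      intro g hg
      obtain ⟨_, him⟩ := Finset.mem_filter.mp hg
      refine Fintype.mem_piFinset.mpr fun i => ?_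
      rw [← him]
      exact Finset.mem_image_of_mem g (Finset.mem_univ i)
    calc ((ordMatch E t).filter (fun g => Finset.image g Finset.univ = M)).card
        ≤ (Fintype.piFinset (fun _ : Fin t => M)).card := Finset.card_le_card hsub
      _ = t ^ t := by rw [Fintype.card_piFinset]; simp [hMc]
  have hOrdle : ((ordMatch E t).card : ℝ) ≤ (S.card : ℝ) * (t : ℝ) ^ t := by
    rw [hcardsum2]
    push_cast
    calc (∑ M ∈ S, (((ordMatch E t).filter (fun g => Finset.image g Finset.univ = M)).card : ℝ))
        ≤ ∑ M ∈ S, ((t : ℝ) ^ t) := by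
          refine Finset.sum_le_sum fun M hM => ?_
          exact_mod_cast hfiber2 M hM
      _ = (S.card : ℝ) * (t : ℝ) ^ t := by rw [Finset.sum_const]; ring
  have htpos : (0:ℝ) < (t : ℝ) ^ t := by
    have : (0:ℝ) < (t:ℝ) := by exact_mod_cast ht
    positivity
  rw [hNatcard]
  have h2 := hOrd t le_rfl
  have hkey : ((E.card : ℝ) / (2 * t)) ^ t = ((E.card : ℝ) / 2) ^ t / (t : ℝ) ^ t := by
    rw [← div_pow, div_div]
  rw [hkey, div_le_iff₀ htpos]
  calc ((E.card : ℝ) / 2) ^ t ≤ ((ordMatch E t).card : ℝ) := h2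
    _ ≤ (S.card : ℝ) * (t : ℝ) ^ t := hOrdle
end

section
/- Let G be a linear k-uniform hypergraph on n vertices and λ = ⌈log n⌉. Then G contains a k-partite subhypergraph H with parts X_1, ..., X_k such that e(H) ≥ e(G)·k!/(kλ)^k and for each i, every vertex w ∈ X_i has degree at most 2λ^k · e(H)/|X_i|. -/
/-!
Colour the vertices with `k` colours: an edge is rainbow for exactly `k! · k^(n-k)` of the `k^n`
colourings, so some colouring has at least `e(G) · k!/k^k` rainbow edges. By linearity every
degree in this `k`-partite hypergraph is less than `n`, so `⌊log deg⌋` sorts the non-isolated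
vertices into `λ` classes. Choosing one class in each part gives `λ^k` subhypergraphs that cover
the rainbow edges, and the largest one, `H`, gets at least a `λ^(-k)` fraction of them. Within a
part of `H` the rainbow degrees agree up to a factor `2λ`, and by maximality of `H` they sum to at
most `λ^(k-1) e(H)`; this gives the balance.
-/

open Finset Real Function

namespace Hypergraph

variable {V : Type*} {k : ℕ}

section Refinement

variable {ι : Type*} [DecidableEq ι]

def refineParts (X : Fin k → Finset V) (g : V → ι) (c : Fin k → ι) : Fin k → Finset V :=
  fun i => {v ∈ X i | g v = c i}

lemma refineParts_subset (X : Fin k → Finset V) (g : V → ι) (c : Fin k → ι) (i : Fin k) :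
    refineParts X g c i ⊆ X i :=
  filter_subset _ _

end Refinement

section ColorClasses

variable [Fintype V]

def colorClasses (f : V → Fin k) (i : Fin k) : Finset V := {v | f v = i}

lemma pairwise_disjoint_colorClasses (f : V → Fin k) : Pairwise (Disjoint on colorClasses f) :=
  fun _ _ hij => disjoint_filter.mpr fun _ _ hi hj => hij (hi ▸ hj)

end ColorClasses

variable [DecidableEq V]

def partiteEdges (E : Finset (Finset V)) (X : Fin k → Finset V) : Finset (Finset V) :=
  {e ∈ E | ∀ i, #(e ∩ X i) = 1}

def degree (H : Finset (Finset V)) (v : V) : ℕ := #{e ∈ H | v ∈ e}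

lemma degree_mono {H H' : Finset (Finset V)} (h : H ⊆ H') (v : V) : degree H v ≤ degree H' v :=
  card_le_card (filter_subset_filter _ h)

lemma sum_degree_le_card {H : Finset (Finset V)} {S : Finset V}
    (h : ∀ e ∈ H, #(S ∩ e) ≤ 1) : ∑ v ∈ S, degree H v ≤ #H := by
  have := sum_card_bipartiteAbove_eq_sum_card_bipartiteBelow (s := S) (t := H) (r := (· ∈ ·))
  simp only [bipartiteAbove, bipartiteBelow, filter_mem_eq_inter] at this
  unfold degree
  simpa [this] using sum_le_card_nsmul H _ 1 h

section Partite

variable {E : Finset (Finset V)} {X Y : Fin k → Finset V} {e : Finset V}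

lemma card_inter_eq_one_of_subset (hXY : ∀ i, X i ⊆ Y i) (hY : Pairwise (Disjoint on Y))
    (he : #e ≤ k) (hX : ∀ i, #(e ∩ X i) = 1) (i : Fin k) : #(e ∩ Y i) = 1 := by
  have hpos : ∀ j ∈ univ, 1 ≤ #(e ∩ Y j) := fun j _ =>
    hX j ▸ card_le_card (inter_subset_inter_left (hXY j))
  have hsum : ∑ j, #(e ∩ Y j) ≤ ∑ _j : Fin k, 1 := by
    rw [← card_biUnion fun a _ b _ hab => (hY hab).mono inter_subset_right inter_subset_right]
    simpa using (card_le_card (biUnion_subset.mpr fun j _ => inter_subset_left)).trans he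
  exact (((sum_eq_sum_iff_of_le hpos).mp (le_antisymm (sum_le_sum hpos) hsum)) i
    (mem_univ i)).symm

lemma partiteEdges_mono (hE : ∀ e ∈ E, #e ≤ k) (hXY : ∀ i, X i ⊆ Y i)
    (hY : Pairwise (Disjoint on Y)) : partiteEdges E X ⊆ partiteEdges E Y := by
  intro e he
  rw [partiteEdges, mem_filter] at he ⊢
  exact ⟨he.1, card_inter_eq_one_of_subset hXY hY (hE e he.1) he.2⟩

lemma partiteEdges_filter_degree_pos (hE : ∀ e ∈ E, #e ≤ k) (hX : Pairwise (Disjoint on X)) :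
    partiteEdges E (fun i => {v ∈ X i | 0 < degree (partiteEdges E X) v}) = partiteEdges E X := by
  refine (partiteEdges_mono hE (fun i => filter_subset _ _) hX).antisymm fun e he => ?_
  have hpos : ∀ v ∈ e, 0 < degree (partiteEdges E X) v := fun v hv =>
    card_pos.mpr ⟨e, mem_filter.mpr ⟨he, hv⟩⟩
  rw [partiteEdges, mem_filter] at he ⊢
  refine ⟨he.1, fun i => ?_⟩
  rw [← he.2 i, ← filter_mem_eq_inter, ← filter_mem_eq_inter]
  exact congrArg card (filter_congr fun v hv => by simp [hpos v hv])

end Partite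

section Refinement

variable {ι : Type*} [DecidableEq ι]
variable {E : Finset (Finset V)} {X : Fin k → Finset V} {e : Finset V}

lemma exists_mem_partiteEdges_refineParts (g : V → ι) (he : e ∈ partiteEdges E X) :
    ∃ c, e ∈ partiteEdges E (refineParts X g c) ∧ ∀ i, ∀ v ∈ e ∩ X i, g v = c i := by
  rw [partiteEdges, mem_filter] at he
  choose a ha using fun i => card_eq_one.mp (he.2 i)
  have hg : ∀ i, ∀ v ∈ e ∩ X i, g v = g (a i) := fun i v hv => by
    rw [ha i, mem_singleton] at hv; rw [hv]
  refine ⟨fun i => g (a i), mem_filter.mpr ⟨he.1, fun i => ?_⟩, hg⟩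
  rw [refineParts, ← he.2 i, ← filter_mem_eq_inter, ← filter_mem_eq_inter]
  exact congrArg card (filter_congr fun v hv => by
    simp only [mem_filter, and_iff_left_iff_imp]
    exact fun hvX => hg i v (mem_inter.mpr ⟨hv, hvX⟩))

variable [Fintype ι]

lemma card_filter_apply_eq (i : Fin k) (a : ι) :
    #{c : Fin k → ι | c i = a} = Fintype.card ι ^ (k - 1) := by
  simpa using Fintype.card_filter_piFinset_const_eq_of_mem (univ : Finset ι) i (mem_univ a)

variable {g : V → ι} {c : Fin k → ι}

lemma card_partiteEdges_le_pow_mul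
    (hc : ∀ c', #(partiteEdges E (refineParts X g c')) ≤ #(partiteEdges E (refineParts X g c))) :
    #(partiteEdges E X) ≤ Fintype.card ι ^ k * #(partiteEdges E (refineParts X g c)) := by
  calc #(partiteEdges E X)
      ≤ #(univ.biUnion fun c' => partiteEdges E (refineParts X g c')) :=
        card_le_card fun e he => by
          obtain ⟨c', hc', -⟩ := exists_mem_partiteEdges_refineParts g he
          exact mem_biUnion.mpr ⟨c', mem_univ c', hc'⟩
    _ ≤ ∑ c', #(partiteEdges E (refineParts X g c')) := card_biUnion_le
    _ ≤ ∑ _c' : Fin k → ι, #(partiteEdges E (refineParts X g c)) :=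
        sum_le_sum fun c' _ => hc c'
    _ = Fintype.card ι ^ k * #(partiteEdges E (refineParts X g c)) := by simp

lemma sum_degree_refineParts_le_pow_mul (hE : ∀ e ∈ E, #e ≤ k) (hX : Pairwise (Disjoint on X))
    (hc : ∀ c', #(partiteEdges E (refineParts X g c')) ≤ #(partiteEdges E (refineParts X g c)))
    (i : Fin k) :
    ∑ v ∈ refineParts X g c i, degree (partiteEdges E X) v ≤
      Fintype.card ι ^ (k - 1) * #(partiteEdges E (refineParts X g c)) := by
  set B := ({c' | c' i = c i} : Finset (Fin k → ι)).biUnion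
    fun c' => partiteEdges E (refineParts X g c')
  have hdeg : ∀ v ∈ refineParts X g c i, degree (partiteEdges E X) v ≤ degree B v := by
    refine fun v hv => card_le_card fun e he => ?_
    rw [mem_filter] at he ⊢
    obtain ⟨c', hc', hg⟩ := exists_mem_partiteEdges_refineParts g he.1
    rw [refineParts, mem_filter] at hv
    refine ⟨mem_biUnion.mpr ⟨c', mem_filter.mpr ⟨mem_univ _, ?_⟩, hc'⟩, he.2⟩
    rw [← hg i v (mem_inter.mpr ⟨he.2, hv.1⟩), hv.2]
  have hB : ∀ e ∈ B, #(refineParts X g c i ∩ e) ≤ 1 := by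
    intro e he
    obtain ⟨c', -, he'⟩ := mem_biUnion.mp he
    have := partiteEdges_mono hE (refineParts_subset X g c') hX he'
    rw [partiteEdges, mem_filter] at this
    rw [inter_comm, ← this.2 i]
    exact card_le_card (inter_subset_inter_left (refineParts_subset X g c i))
  calc ∑ v ∈ refineParts X g c i, degree (partiteEdges E X) v
      ≤ ∑ v ∈ refineParts X g c i, degree B v := sum_le_sum hdeg
    _ ≤ #B := sum_degree_le_card hB
    _ ≤ ∑ c' with c' i = c i, #(partiteEdges E (refineParts X g c')) := card_biUnion_le
    _ ≤ #{c' : Fin k → ι | c' i = c i} • #(partiteEdges E (refineParts X g c)) :=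
        sum_le_card_nsmul _ _ _ fun c' _ => hc c'
    _ = Fintype.card ι ^ (k - 1) * #(partiteEdges E (refineParts X g c)) := by
        rw [card_filter_apply_eq, smul_eq_mul]

end Refinement

lemma le_two_mul_mul_of_floor_log_eq {a b L : ℕ} (ha : 0 < a) (hb : 0 < b)
    (hab : ⌊log a⌋₊ = ⌊log b⌋₊) (hL : ⌊log b⌋₊ < L) : a ≤ 2 * L * b := by
  -- `a < e · e^j ≤ e · b`; if `j ≥ 1` then `e < 4 ≤ 2L`, and if `j = 0` simply `a < e`.
  set j := ⌊log b⌋₊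
  have hb' : exp j ≤ b := calc
    exp j ≤ exp (log b) := exp_le_exp.mpr (Nat.floor_le (log_nonneg (by exact_mod_cast hb)))
    _ = b := exp_log (by exact_mod_cast hb)
  have ha' : (a : ℝ) < exp 1 * exp j := calc
    (a : ℝ) = exp (log a) := (exp_log (by exact_mod_cast ha)).symm
    _ < exp (1 + j) := exp_lt_exp.mpr (by linarith [hab ▸ Nat.lt_floor_add_one (log a)])
    _ = exp 1 * exp j := exp_add 1 j
  have he := exp_one_lt_d9
  rcases Nat.eq_zero_or_pos j with hj | hj
  · have : (a : ℝ) < 3 := by rw [hj, Nat.cast_zero, exp_zero] at ha'; linarith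
    have : a ≤ 2 := by exact_mod_cast (Nat.lt_succ_iff.mp (by exact_mod_cast this))
    nlinarith
  · have hL2 : (2 : ℝ) ≤ L := by exact_mod_cast (by omega : 2 ≤ L)
    have : (a : ℝ) ≤ 2 * L * b := by nlinarith [exp_pos j]
    exact_mod_cast this

lemma floor_log_lt_ceil_log {a b : ℕ} (ha : 0 < a) (hab : a < b) : ⌊log a⌋₊ < ⌈log b⌉₊ :=
  (Nat.floor_lt (log_nonneg (Nat.one_le_cast.mpr ha))).mpr
    ((log_lt_log (Nat.cast_pos.mpr ha) (Nat.cast_lt.mpr hab)).trans_le (Nat.le_ceil _))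

lemma degree_lt_card [Fintype V] {H : Finset (Finset V)} (hunif : ∀ e ∈ H, #e = k)
    (hlin : ∀ e ∈ H, ∀ f ∈ H, e ≠ f → #(e ∩ f) ≤ 1) (hk : 0 < k) (hV : 2 ≤ Fintype.card V)
    (v : V) : degree H v < Fintype.card V := by
  set S := {e ∈ H | v ∈ e}
  rcases (Nat.one_le_iff_ne_zero.mpr hk.ne').eq_or_lt with rfl | hk2
  · have hS : S ⊆ {{v}} := fun e he => by
      rw [mem_filter] at he
      obtain ⟨a, rfl⟩ := card_eq_one.mp (hunif e he.1)
      rw [mem_singleton.mp he.2]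
      exact mem_singleton_self _
    have := card_le_card hS
    rw [card_singleton] at this
    show #S < _
    omega
  · have hdisj : (S : Set (Finset V)).PairwiseDisjoint (·.erase v) := by
      intro e he f hf hef
      rw [mem_coe, mem_filter] at he hf
      refine disjoint_left.mpr fun x hxe hxf => (mem_erase.mp hxe).1 ?_
      exact card_le_one.mp (hlin e he.1 f hf.1 hef) x
        (mem_inter.mpr ⟨mem_of_mem_erase hxe, mem_of_mem_erase hxf⟩) v
        (mem_inter.mpr ⟨he.2, hf.2⟩)
    have hne : ∀ e ∈ S, (e.erase v).Nonempty := fun e he => by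
      rw [mem_filter] at he
      rw [← card_pos, card_erase_of_mem he.2, hunif e he.1]
      omega
    calc degree H v ≤ #(S.biUnion (·.erase v)) := card_le_card_biUnion hdisj hne
      _ ≤ #(univ.erase v) :=
        card_le_card (biUnion_subset.mpr fun e _ => erase_subset_erase _ (subset_univ e))
      _ < Fintype.card V := by rw [card_erase_of_mem (mem_univ v), card_univ]; omega

theorem exists_balanced_refinement {E : Finset (Finset V)} {X : Fin k → Finset V} {L : ℕ}
    (hE : ∀ e ∈ E, #e ≤ k) (hX : Pairwise (Disjoint on X)) (hL : 0 < L)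
    (hD : ∀ v, 0 < degree (partiteEdges E X) v → ⌊log (degree (partiteEdges E X) v)⌋₊ < L) :
    ∃ Y : Fin k → Finset V, (∀ i, Y i ⊆ X i) ∧
      #(partiteEdges E X) ≤ L ^ k * #(partiteEdges E Y) ∧
      ∀ i, ∀ w ∈ Y i,
        #(Y i) * degree (partiteEdges E Y) w ≤ 2 * L ^ k * #(partiteEdges E Y) := by
  set D := degree (partiteEdges E X)
  -- Isolated vertices are discarded: they would enlarge the parts without adding degree.
  set X' : Fin k → Finset V := fun i => {v ∈ X i | 0 < D v}
  have hX'X : ∀ i, X' i ⊆ X i := fun i => filter_subset _ _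
  have hX' : Pairwise (Disjoint on X') := fun i j hij => (hX hij).mono (hX'X i) (hX'X j)
  have hH : partiteEdges E X' = partiteEdges E X := partiteEdges_filter_degree_pos hE hX
  have : NeZero L := ⟨hL.ne'⟩
  -- Reducing mod `L` loses nothing on the vertices that matter, where `⌊log (D v)⌋₊ < L`.
  set g : V → Fin L := fun v => Fin.ofNat L ⌊log (D v)⌋₊
  set H := fun c => partiteEdges E (refineParts X' g c)
  obtain ⟨c, -, hc⟩ := exists_max_image univ (fun c => #(H c)) univ_nonempty
  replace hc : ∀ c', #(H c') ≤ #(H c) := fun c' => hc c' (mem_univ c')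
  set Y := refineParts X' g c
  refine ⟨Y, fun i => (refineParts_subset _ _ _ i).trans (hX'X i), ?_, fun i w hw => ?_⟩
  · simpa [hH] using card_partiteEdges_le_pow_mul hc
  have hclass : ∀ v ∈ Y i, 0 < D v ∧ ⌊log (D v)⌋₊ = c i := fun v hv => by
    simp only [Y, refineParts, X', mem_filter] at hv
    refine ⟨hv.1.2, ?_⟩
    rw [← hv.2, Fin.val_ofNat, Nat.mod_eq_of_lt (hD v hv.1.2)]
  have hsum := sum_degree_refineParts_le_pow_mul hE hX' hc i
  rw [hH, Fintype.card_fin] at hsum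
  calc #(Y i) * degree (H c) w
      ≤ #(Y i) * D w := Nat.mul_le_mul_left _ <| degree_mono
        (partiteEdges_mono hE (fun j => (refineParts_subset _ _ _ j).trans (hX'X j)) hX) w
    _ = ∑ _v ∈ Y i, D w := by rw [sum_const, smul_eq_mul]
    _ ≤ ∑ v ∈ Y i, 2 * L * D v := sum_le_sum fun v hv =>
        le_two_mul_mul_of_floor_log_eq (hclass w hw).1 (hclass v hv).1
          ((hclass w hw).2.trans (hclass v hv).2.symm) ((hclass v hv).2 ▸ (c i).isLt)
    _ = 2 * L * ∑ v ∈ Y i, D v := (mul_sum _ _ _).symm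
    _ ≤ 2 * L * (L ^ (k - 1) * #(H c)) := Nat.mul_le_mul_left _ hsum
    _ = 2 * L ^ k * #(H c) := by rw [← pow_sub_one_mul i.pos.ne' L]; ring

section Coloring

variable [Fintype V]

lemma forall_card_inter_colorClasses_eq_one_iff {f : V → Fin k} {e : Finset V} :
    (∀ i, #(e ∩ colorClasses f i) = 1) ↔ Bijective (fun v : e => f v) := by
  rw [bijective_iff_existsUnique]
  refine forall_congr' fun i => ?_
  simp only [colorClasses, card_eq_one, Finset.ext_iff, mem_inter, mem_filter, mem_univ,
    true_and, mem_singleton]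
  constructor
  · rintro ⟨a, ha⟩
    obtain ⟨hae, hfa⟩ := (ha a).mpr rfl
    exact ⟨⟨a, hae⟩, hfa, fun v hv => Subtype.ext ((ha v).mp ⟨v.2, hv⟩)⟩
  · rintro ⟨⟨a, hae⟩, hfa, huniq⟩
    refine ⟨a, fun v => ⟨fun hv => congrArg Subtype.val (huniq ⟨v, hv.1⟩ hv.2), ?_⟩⟩
    rintro rfl
    exact ⟨hae, hfa⟩

lemma card_rainbow_colorings {e : Finset V} (he : #e = k) :
    #{f : V → Fin k | ∀ i, #(e ∩ colorClasses f i) = 1} =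
      k.factorial * k ^ (Fintype.card V - k) := by
  simp_rw [forall_card_inter_colorClasses_eq_one_iff]
  rw [← Fintype.card_subtype]
  have hcompl : Fintype.card {v // v ∉ e} = Fintype.card V - k := by
    rw [Fintype.card_subtype_compl, Fintype.card_coe, he]
  calc Fintype.card {f : V → Fin k // Bijective fun v : e => f v}
      = Fintype.card ((e ≃ Fin k) × ({v // v ∉ e} → Fin k)) := Fintype.card_congr <|
        ((Equiv.piEquivPiSubtypeProd (· ∈ e) _).subtypeEquiv fun _ => Iff.rfl).trans
          (Equiv.prodSubtypeFstEquivSubtypeProd.trans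
            (Equiv.bijectiveEquiv.prodCongr (Equiv.refl _)))
    _ = k.factorial * k ^ (Fintype.card V - k) := by
      rw [Fintype.card_prod, Fintype.card_equiv (e.equivFinOfCardEq he), Fintype.card_fun,
        hcompl, Fintype.card_coe, he, Fintype.card_fin]

lemma exists_coloring_le_card_partiteEdges {E : Finset (Finset V)} (hE : ∀ e ∈ E, #e = k)
    (hk : 0 < k) :
    ∃ f : V → Fin k, #E * k.factorial ≤ k ^ k * #(partiteEdges E (colorClasses f)) := by
  have : NeZero k := ⟨hk.ne'⟩
  have hsum : ∑ f : V → Fin k, #(partiteEdges E (colorClasses f)) =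
      #E * (k.factorial * k ^ (Fintype.card V - k)) := by
    have := sum_card_bipartiteAbove_eq_sum_card_bipartiteBelow (s := univ) (t := E)
      (r := fun (f : V → Fin k) e => ∀ i, #(e ∩ colorClasses f i) = 1)
    simp only [bipartiteAbove, bipartiteBelow] at this
    unfold partiteEdges
    rw [this, sum_congr rfl fun e he => card_rainbow_colorings (hE e he), sum_const, smul_eq_mul]
  obtain ⟨f, -, hf⟩ := exists_le_of_sum_le (s := univ) (f := fun _ => #E * k.factorial)
    (g := fun f => k ^ k * #(partiteEdges E (colorClasses f))) univ_nonempty <| by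
    rw [sum_const, ← mul_sum, hsum, card_univ, Fintype.card_fun, Fintype.card_fin, smul_eq_mul]
    calc k ^ Fintype.card V * (#E * k.factorial)
        ≤ k ^ (k + (Fintype.card V - k)) * (#E * k.factorial) := by gcongr; omega
      _ = k ^ k * (#E * (k.factorial * k ^ (Fintype.card V - k))) := by ring
  exact ⟨f, hf⟩

end Coloring

end Hypergraph

open Hypergraph

/-- Regularization: a linear k-uniform hypergraph `G` on `n` vertices contains a k-partite
subhypergraph `H` (with parts `X 0, …, X (k-1)`) with `e(H) ≥ e(G)·k!/(kλ)^k` which is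
`2λ^k`-balanced, where `λ = ⌈log n⌉`. -/
theorem stmt_12 {V : Type*} [Fintype V] [DecidableEq V] (k : ℕ)
    (E : Finset (Finset V))
    (hunif : ∀ e ∈ E, e.card = k)
    (hlinear : ∀ e ∈ E, ∀ f ∈ E, e ≠ f → (e ∩ f).card ≤ 1) :
    ∃ X : Fin k → Finset V, (∀ i j, i ≠ j → Disjoint (X i) (X j)) ∧
      ∀ H : Finset (Finset V), H = E.filter (fun e => ∀ i, (e ∩ X i).card = 1) →
        (E.card : ℝ) * (k.factorial : ℝ) /
            ((k : ℝ) * (⌈Real.log (Fintype.card V)⌉₊ : ℝ)) ^ k ≤ H.card ∧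
        ∀ i, ∀ w ∈ X i, ((H.filter (fun e => w ∈ e)).card : ℝ) ≤
          2 * (⌈Real.log (Fintype.card V)⌉₊ : ℝ) ^ k * H.card / (X i).card := by
  set L := ⌈log (Fintype.card V)⌉₊
  rcases Nat.eq_zero_or_pos k with rfl | hk
  · exact ⟨Fin.elim0, fun i => i.elim0, fun H hH => ⟨by simp [hH], fun i => i.elim0⟩⟩
  rcases Nat.eq_zero_or_pos L with hL | hL
  · -- With empty parts `H = ∅`, and `(k * L) ^ k = 0` gives the edge bound by `x / 0 = 0`.
    exact ⟨fun _ => ∅, by simp, fun H _ => ⟨by simp [hL, hk.ne'], by simp⟩⟩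
  have hV : 2 ≤ Fintype.card V := by
    have := (log_pos_iff (Nat.cast_nonneg _)).mp (Nat.ceil_pos.mp hL)
    exact_mod_cast this
  obtain ⟨f, hf⟩ := exists_coloring_le_card_partiteEdges hunif hk
  obtain ⟨Y, hYX, hcard, hbal⟩ := exists_balanced_refinement (fun e he => (hunif e he).le)
    (pairwise_disjoint_colorClasses f) hL fun v hv => floor_log_lt_ceil_log hv <|
      (degree_mono (filter_subset _ _) v).trans_lt (degree_lt_card hunif hlinear hk hV v)
  refine ⟨Y, fun i j hij => (pairwise_disjoint_colorClasses f hij).mono (hYX i) (hYX j),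
    fun H hH => ?_⟩
  obtain rfl : H = partiteEdges E Y := hH
  refine ⟨(div_le_iff₀ (by positivity)).mpr ?_, fun i w hw => ?_⟩
  · have : #E * k.factorial ≤ #(partiteEdges E Y) * (k * L) ^ k := calc
      #E * k.factorial ≤ k ^ k * (L ^ k * #(partiteEdges E Y)) :=
        hf.trans (Nat.mul_le_mul_left _ hcard)
      _ = #(partiteEdges E Y) * (k * L) ^ k := by ring
    exact_mod_cast this
  · rw [le_div_iff₀ (by exact_mod_cast card_pos.mpr ⟨w, hw⟩), mul_comm]
    exact_mod_cast hbal i w hw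
end

section
/- Let k ≥ 2 and G a properly edge-coloured graph on n vertices with maximum degree Δ. Then the number of homomorphisms from the cycle C_{2k} to G which are not injective rainbow embeddings of C_{2k} is at most 64·k^{3/2}·Δ^{1/2}·n^{1/(2k)}·hom(C_{2k}, G)^{1 − 1/(2k)}. -/
namespace Stmt13Dev


/-- Shift lemma for adjacent-log-convex nonnegative sequences. -/
lemma seq_step (ψ : ℕ → ℝ) (h0 : ∀ j, 0 ≤ ψ j)
    (hlc : ∀ j, 1 ≤ j → ψ j ^ 2 ≤ ψ (j - 1) * ψ (j + 1)) :
    ∀ b a : ℕ, 1 ≤ a → a ≤ b → ψ a * ψ b ≤ ψ (a - 1) * ψ (b + 1) := by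
  intro b
  induction b with
  | zero => intro a ha hab; omega
  | succ b ih =>
    intro a ha hab
    rcases Nat.lt_or_ge a (b+1) with hlt | hge
    · -- a ≤ b, use ih and hlc (b+1)
      have h1 : ψ a * ψ b ≤ ψ (a - 1) * ψ (b + 1) := ih a ha (by omega)
      have h2 : ψ (b+1) ^ 2 ≤ ψ b * ψ (b + 2) := by
        have := hlc (b+1) (by omega)
        simpa using this
      by_cases hb : ψ b = 0
      · have : ψ (b+1) = 0 := by nlinarith [h0 (b+1), h0 (b+2), sq_nonneg (ψ (b+1))]
        rw [this]
        have := mul_nonneg (h0 (a-1)) (h0 (b+2)); linarith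
      · by_cases hb1 : ψ (b+1) = 0
        · rw [hb1]
          have := mul_nonneg (h0 (a-1)) (h0 (b+2)); linarith
        · have hbpos : 0 < ψ b := lt_of_le_of_ne (h0 b) (Ne.symm hb)
          have hb1pos : 0 < ψ (b+1) := lt_of_le_of_ne (h0 (b+1)) (Ne.symm hb1)
          have key : (ψ a * ψ (b+1)) * (ψ b * ψ (b+1)) ≤ (ψ (a-1) * ψ (b+2)) * (ψ b * ψ (b+1)) := by
            have hmul := mul_le_mul h1 h2 (sq_nonneg _) (mul_nonneg (h0 (a-1)) (h0 (b+1)))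
            nlinarith [hmul]
          exact le_of_mul_le_mul_right key (by positivity)
    · -- a = b+1 : base case
      have hab' : a = b + 1 := by omega
      rw [hab']
      have := hlc (b+1) (by omega)
      nlinarith [this]

lemma seq_extreme_aux (ψ : ℕ → ℝ) (h0 : ∀ j, 0 ≤ ψ j)
    (hlc : ∀ j, 1 ≤ j → ψ j ^ 2 ≤ ψ (j - 1) * ψ (j + 1)) :
    ∀ a b : ℕ, 1 ≤ a → a ≤ b → ψ a * ψ b ≤ ψ 1 * ψ (a + b - 1) := by
  intro a
  induction a with
  | zero => intro b ha; omega
  | succ a ih =>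
    intro b ha hab
    rcases Nat.eq_zero_or_pos a with rfl | hapos
    · have : 1 + b - 1 = b := by omega
      rw [this]
    · have h1 : ψ (a+1) * ψ b ≤ ψ a * ψ (b+1) := by
        have := seq_step ψ h0 hlc b (a+1) (by omega) hab
        simpa using this
      have h2 : ψ a * ψ (b+1) ≤ ψ 1 * ψ (a + (b+1) - 1) := ih (b+1) hapos (by omega)
      have : a + (b + 1) - 1 = (a + 1) + b - 1 := by omega
      rw [this] at h2
      linarith

/-- products spread to the extremes for log-convex sequences -/
lemma seq_extreme (ψ : ℕ → ℝ) (h0 : ∀ j, 0 ≤ ψ j)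
    (hlc : ∀ j, 1 ≤ j → ψ j ^ 2 ≤ ψ (j - 1) * ψ (j + 1)) (a b : ℕ)
    (ha : 1 ≤ a) (hb : 1 ≤ b) : ψ a * ψ b ≤ ψ 1 * ψ (a + b - 1) := by
  rcases le_or_gt a b with h | h
  · exact seq_extreme_aux ψ h0 hlc a b ha h
  · have := seq_extreme_aux ψ h0 hlc b a hb (by omega)
    have hc : b + a - 1 = a + b - 1 := by omega
    rw [hc] at this; linarith [this]

/-- maximum principle for adjacent-log-convex sequences on [0,M] -/
lemma seq_max (ψ : ℕ → ℝ) (M : ℕ) (h0 : ∀ j, j ≤ M → 0 ≤ ψ j)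
    (hlc : ∀ j, 1 ≤ j → j < M → ψ j ^ 2 ≤ ψ (j - 1) * ψ (j + 1)) :
    ∀ j, j ≤ M → ψ j ≤ max (ψ 0) (ψ M) := by
  -- take the least maximizer
  have hne : ((Finset.range (M+1)).image ψ).Nonempty := ⟨ψ 0, Finset.mem_image_of_mem _ (by simp)⟩
  set W := ((Finset.range (M+1)).image ψ).max' hne with hW
  have hWmem : W ∈ (Finset.range (M+1)).image ψ := Finset.max'_mem _ _
  have hWub : ∀ j, j ≤ M → ψ j ≤ W := by
    intro j hj
    exact Finset.le_max' _ _ (Finset.mem_image_of_mem _ (by simp; omega))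
  suffices h : W ≤ max (ψ 0) (ψ M) by
    intro j hj; exact le_trans (hWub j hj) h
  -- set of maximizers
  set T := (Finset.range (M+1)).filter (fun j => ψ j = W) with hT
  have hTne : T.Nonempty := by
    obtain ⟨j, hj, hjW⟩ := Finset.mem_image.mp hWmem
    exact ⟨j, Finset.mem_filter.mpr ⟨hj, hjW⟩⟩
  set j0 := T.min' hTne with hj0
  have hj0T : j0 ∈ T := Finset.min'_mem _ _
  obtain ⟨hj0r, hj0W⟩ := Finset.mem_filter.mp hj0T
  have hj0M : j0 ≤ M := by have := Finset.mem_range.mp hj0r; omega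
  rcases Nat.eq_zero_or_pos j0 with hz0 | hpos
  · rw [← hj0W, hz0]; exact le_max_left _ _
  rcases Nat.eq_or_lt_of_le hj0M with heq | hlt
  · rw [← hj0W, heq]; exact le_max_right _ _
  · -- interior maximizer: derive contradiction with minimality, or W ≤ 0
    exfalso
    have hsq := hlc j0 hpos hlt
    have hle1 : ψ (j0 + 1) ≤ W := hWub _ (by omega)
    have hle0 : ψ (j0 - 1) ≤ W := hWub _ (by omega)
    by_cases hWz : W ≤ 0
    · -- then ψ j0 = W and all ψ between 0; but then ψ 0 ≤ W ≤ max...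
      -- ψ 0 ≤ W = 0 and ψ 0 ≥ 0 so ψ 0 = 0 = W, so 0 ∈ T, so j0 = 0, contra hpos
      have hW0 : W = 0 := le_antisymm hWz (le_trans (h0 0 (by omega)) (hWub 0 (by omega)))
      have : (0:ℕ) ∈ T := Finset.mem_filter.mpr ⟨by simp, le_antisymm (hWub 0 (by omega)) (by rw [hW0]; exact h0 0 (by omega)) ⟩
      have := Finset.min'_le T 0 this
      omega
    · push_neg at hWz
      have hψpos : 0 < ψ j0 := by rw [hj0W]; exact hWz
      -- ψ j0 ^2 ≤ ψ(j0-1) ψ(j0+1) ≤ ψ(j0-1) * W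
      have h1 : ψ j0 ^ 2 ≤ ψ (j0 - 1) * W := by
        calc ψ j0 ^2 ≤ ψ (j0-1) * ψ (j0+1) := hsq
          _ ≤ ψ (j0-1) * W := by
            apply mul_le_mul_of_nonneg_left hle1 (h0 _ (by omega))
      have h2 : W ≤ ψ (j0 - 1) := by
        rw [hj0W] at h1
        have := mul_le_mul_of_nonneg_right (le_refl W) (le_of_lt hWz)
        nlinarith
      have : (j0 - 1) ∈ T := Finset.mem_filter.mpr ⟨by simp; omega, le_antisymm (hWub _ (by omega)) h2⟩
      have := Finset.min'_le T _ this
      omega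

/-- iterated log-convexity power bound: ψ m ^ (m+1) ≤ ψ 0 * ψ (m+1) ^ m -/
lemma seq_pow (ψ : ℕ → ℝ) (h0 : ∀ j, 0 ≤ ψ j)
    (hlc : ∀ j, 1 ≤ j → ψ j ^ 2 ≤ ψ (j - 1) * ψ (j + 1)) :
    ∀ m : ℕ, ψ m ^ (m+1) ≤ ψ 0 * ψ (m+1) ^ m := by
  intro m
  induction m with
  | zero => simp
  | succ m ih =>
    by_cases hz : ψ (m+1) = 0
    · rw [hz]
      rw [zero_pow (by omega)]
      exact mul_nonneg (h0 0) (pow_nonneg (h0 _) _)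
    have hpos : 0 < ψ (m+1) := lt_of_le_of_ne (h0 _) (Ne.symm hz)
    have hsq : ψ (m+1) ^ 2 ≤ ψ m * ψ (m+2) := by
      have := hlc (m+1) (by omega); simpa using this
    have key : (ψ (m+1) ^ (m+2)) * ψ (m+1) ^ m ≤ (ψ 0 * ψ (m+2) ^ (m+1)) * ψ (m+1) ^ m := by
      have e1 : (ψ (m+1) ^ (m+2)) * ψ (m+1) ^ m = (ψ (m+1) ^ 2) ^ (m+1) := by ring
      have e2 : (ψ (m+1)^2)^(m+1) ≤ (ψ m * ψ (m+2)) ^ (m+1) :=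
        pow_le_pow_left₀ (sq_nonneg _) hsq (m+1)
      have e3 : (ψ m * ψ (m+2)) ^ (m+1) = ψ m ^ (m+1) * ψ (m+2) ^ (m+1) := by ring
      have e4 : ψ m ^ (m+1) * ψ (m+2) ^ (m+1) ≤ (ψ 0 * ψ (m+1) ^ m) * ψ (m+2) ^ (m+1) :=
        mul_le_mul_of_nonneg_right ih (pow_nonneg (h0 _) _)
      calc (ψ (m+1) ^ (m+2)) * ψ (m+1) ^ m = (ψ (m+1)^2)^(m+1) := e1
        _ ≤ (ψ m * ψ (m+2)) ^ (m+1) := e2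
        _ = ψ m ^ (m+1) * ψ (m+2) ^ (m+1) := e3
        _ ≤ (ψ 0 * ψ (m+1) ^ m) * ψ (m+2) ^ (m+1) := e4
        _ = (ψ 0 * ψ (m+2) ^ (m+1)) * ψ (m+1) ^ m := by ring
    exact le_of_mul_le_mul_right key (pow_pos hpos m)


open Finset Matrix SimpleGraph

variable {V : Type*} [Fintype V] [DecidableEq V] (G : SimpleGraph V) [DecidableRel G.Adj]

lemma powA_nonneg (p : ℕ) (x y : V) : 0 ≤ (G.adjMatrix ℝ ^ p) x y := by
  induction p generalizing x y with
  | zero => rw [pow_zero, Matrix.one_apply]; split <;> norm_num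
  | succ p ih =>
    rw [pow_succ, Matrix.mul_apply]
    apply Finset.sum_nonneg; intro z _
    apply mul_nonneg (ih x z)
    rw [adjMatrix_apply]; split <;> norm_num

lemma powA_symm (p : ℕ) (x y : V) : (G.adjMatrix ℝ ^ p) x y = (G.adjMatrix ℝ ^ p) y x := by
  have h : (G.adjMatrix ℝ ^ p)ᵀ = G.adjMatrix ℝ ^ p := by
    rw [Matrix.transpose_pow, transpose_adjMatrix]
  conv_lhs => rw [← h]
  rw [Matrix.transpose_apply]

lemma powA_mul_apply (r s : ℕ) (x z : V) :
    (G.adjMatrix ℝ ^ (r + s)) x z = ∑ y, (G.adjMatrix ℝ ^ r) x y * (G.adjMatrix ℝ ^ s) y z := by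
  rw [pow_add, Matrix.mul_apply]

lemma diag_form (r s : ℕ) (x : V) :
    (G.adjMatrix ℝ ^ (r + s)) x x = ∑ y, (G.adjMatrix ℝ ^ r) x y * (G.adjMatrix ℝ ^ s) x y := by
  rw [powA_mul_apply]
  exact Finset.sum_congr rfl fun y _ => by rw [powA_symm G s y x]

lemma diag_cs (p q : ℕ) (x : V) :
    ((G.adjMatrix ℝ ^ (p + q)) x x) ^ 2 ≤
      ((G.adjMatrix ℝ ^ (p + p)) x x) * ((G.adjMatrix ℝ ^ (q + q)) x x) := by
  rw [diag_form G p q x, diag_form G p p x, diag_form G q q x]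
  have h := Finset.sum_mul_sq_le_sq_mul_sq Finset.univ
    (fun y => (G.adjMatrix ℝ ^ p) x y) (fun y => (G.adjMatrix ℝ ^ q) x y)
  calc (∑ y, (G.adjMatrix ℝ ^ p) x y * (G.adjMatrix ℝ ^ q) x y) ^ 2
      ≤ (∑ y, (G.adjMatrix ℝ ^ p) x y ^ 2) * ∑ y, (G.adjMatrix ℝ ^ q) x y ^ 2 := h
    _ = (∑ y, (G.adjMatrix ℝ ^ p) x y * (G.adjMatrix ℝ ^ p) x y) *
        ∑ y, (G.adjMatrix ℝ ^ q) x y * (G.adjMatrix ℝ ^ q) x y := by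
        simp only [pow_two]
  
lemma trace_form (r s : ℕ) :
    Matrix.trace (G.adjMatrix ℝ ^ (r + s)) =
      ∑ t ∈ Finset.univ ×ˢ (Finset.univ : Finset V),
        (G.adjMatrix ℝ ^ r) t.1 t.2 * (G.adjMatrix ℝ ^ s) t.1 t.2 := by
  rw [Finset.sum_product]
  unfold Matrix.trace
  apply Finset.sum_congr rfl
  intro x _
  rw [Matrix.diag]
  rw [powA_mul_apply]
  exact Finset.sum_congr rfl fun y _ => by rw [powA_symm G s y x]

lemma trace_cs (p q : ℕ) :
    (Matrix.trace (G.adjMatrix ℝ ^ (p + q))) ^ 2 ≤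
      Matrix.trace (G.adjMatrix ℝ ^ (p + p)) * Matrix.trace (G.adjMatrix ℝ ^ (q + q)) := by
  rw [trace_form G p q, trace_form G p p, trace_form G q q]
  have h := Finset.sum_mul_sq_le_sq_mul_sq (Finset.univ ×ˢ (Finset.univ : Finset V))
    (fun t => (G.adjMatrix ℝ ^ p) t.1 t.2) (fun t => (G.adjMatrix ℝ ^ q) t.1 t.2)
  calc (∑ t ∈ Finset.univ ×ˢ Finset.univ, (G.adjMatrix ℝ ^ p) t.1 t.2 * (G.adjMatrix ℝ ^ q) t.1 t.2) ^ 2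
      ≤ _ := h
    _ = _ := by simp only [pow_two]

lemma trace_pow_nonneg (p : ℕ) : 0 ≤ Matrix.trace (G.adjMatrix ℝ ^ p) := by
  unfold Matrix.trace
  exact Finset.sum_nonneg fun x _ => powA_nonneg G p x x

lemma sq_diag_deg (x : V) : (G.adjMatrix ℝ ^ 2) x x = (G.degree x : ℝ) := by
  rw [pow_two]
  exact_mod_cast adjMatrix_mul_self_apply_self G x

variable (k : ℕ)

lemma vertex_pointwise (hk : 2 ≤ k) (d : ℕ) (hd1 : 1 ≤ d) (hd2 : d ≤ 2 * k - 2) (x : V) :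
    (G.adjMatrix ℝ ^ d) x x * (G.adjMatrix ℝ ^ (2 * k - d)) x x ≤
      (G.adjMatrix ℝ ^ 2) x x * (G.adjMatrix ℝ ^ (2 * k - 2)) x x := by
  set ψ : ℕ → ℝ := fun j => (G.adjMatrix ℝ ^ (2 * j)) x x with hψ
  have h0 : ∀ j, 0 ≤ ψ j := fun j => powA_nonneg G _ x x
  have hlc : ∀ j, 1 ≤ j → ψ j ^ 2 ≤ ψ (j - 1) * ψ (j + 1) := by
    intro j hj
    have e1 : 2 * j = (j - 1) + (j + 1) := by omega
    have e2 : 2 * (j - 1) = (j - 1) + (j - 1) := by omega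
    have e3 : 2 * (j + 1) = (j + 1) + (j + 1) := by omega
    simp only [hψ, e1, e2, e3]
    exact diag_cs G (j - 1) (j + 1) x
  have key2 : (G.adjMatrix ℝ ^ 2) x x = ψ 1 := by simp [hψ]
  have key2k : (G.adjMatrix ℝ ^ (2 * k - 2)) x x = ψ (k - 1) := by
    have : 2 * (k - 1) = 2 * k - 2 := by omega
    simp [hψ, this]
  rw [key2, key2k]
  rcases Nat.even_or_odd d with ⟨e, he⟩ | ⟨e, he⟩
  · -- d = 2e
    have he1 : 1 ≤ e := by omega
    have he2 : e ≤ k - 1 := by omega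
    have hd' : d = 2 * e := by omega
    have hnd : 2 * k - d = 2 * (k - e) := by omega
    rw [hnd, hd']
    have := seq_extreme ψ h0 hlc e (k - e) he1 (by omega)
    have harg : e + (k - e) - 1 = k - 1 := by omega
    rw [harg] at this
    simp only [hψ] at this
    exact this
  · -- d = 2e + 1
    rcases Nat.eq_zero_or_pos e with he0 | hepos
    · -- d = 1
      have hd' : d = 1 := by omega
      rw [hd', pow_one, adjMatrix_apply, if_neg (G.irrefl)]
      rw [zero_mul]
      exact mul_nonneg (h0 1) (h0 (k - 1))
    · have heK : e ≤ k - 2 := by omega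
      set t1 := (G.adjMatrix ℝ ^ d) x x with ht1
      set t2 := (G.adjMatrix ℝ ^ (2 * k - d)) x x with ht2
      have ht1n : 0 ≤ t1 := powA_nonneg G _ x x
      have ht2n : 0 ≤ t2 := powA_nonneg G _ x x
      have hs1 : t1 ^ 2 ≤ ψ e * ψ (e + 1) := by
        have e1 : d = e + (e + 1) := by omega
        have e2 : 2 * e = e + e := by omega
        have e3 : 2 * (e + 1) = (e + 1) + (e + 1) := by omega
        rw [ht1, e1]
        simp only [hψ, e2, e3]
        exact diag_cs G e (e + 1) x
      have hs2 : t2 ^ 2 ≤ ψ (k - e - 1) * ψ (k - e) := by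
        have e1 : 2 * k - d = (k - e - 1) + (k - e) := by omega
        have e2 : 2 * (k - e - 1) = (k - e - 1) + (k - e - 1) := by omega
        have e3 : 2 * (k - e) = (k - e) + (k - e) := by omega
        rw [ht2, e1]
        simp only [hψ, e2, e3]
        exact diag_cs G (k - e - 1) (k - e) x
      have hx1 : ψ e * ψ (k - e) ≤ ψ 1 * ψ (k - 1) := by
        have := seq_extreme ψ h0 hlc e (k - e) hepos (by omega)
        have harg : e + (k - e) - 1 = k - 1 := by omega
        rwa [harg] at this
      have hx2 : ψ (e + 1) * ψ (k - e - 1) ≤ ψ 1 * ψ (k - 1) := by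
        have := seq_extreme ψ h0 hlc (e + 1) (k - e - 1) (by omega) (by omega)
        have harg : (e + 1) + (k - e - 1) - 1 = k - 1 := by omega
        rwa [harg] at this
      -- combine
      have hRn : 0 ≤ ψ 1 * ψ (k - 1) := mul_nonneg (h0 1) (h0 (k - 1))
      nlinarith [mul_le_mul hs1 hs2 (sq_nonneg t2) (mul_nonneg (h0 e) (h0 (e+1))),
        mul_le_mul hx1 hx2 (mul_nonneg (h0 (e+1)) (h0 (k-e-1))) hRn,
        mul_nonneg ht1n ht2n, sq_nonneg (t1 * t2 - ψ 1 * ψ (k-1)),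
        sq_nonneg (t1 * t2 + ψ 1 * ψ (k-1))]

lemma vertex_class_bound (hk : 2 ≤ k) (d : ℕ) (hd1 : 1 ≤ d) (hd2 : d ≤ 2 * k - 2) :
    ∑ x : V, (G.adjMatrix ℝ ^ d) x x * (G.adjMatrix ℝ ^ (2 * k - d)) x x ≤
      (G.maxDegree : ℝ) * Matrix.trace (G.adjMatrix ℝ ^ (2 * k - 2)) := by
  calc ∑ x : V, (G.adjMatrix ℝ ^ d) x x * (G.adjMatrix ℝ ^ (2 * k - d)) x x
      ≤ ∑ x : V, (G.adjMatrix ℝ ^ 2) x x * (G.adjMatrix ℝ ^ (2 * k - 2)) x x :=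
        Finset.sum_le_sum fun x _ => vertex_pointwise G k hk d hd1 hd2 x
    _ ≤ ∑ x : V, (G.maxDegree : ℝ) * (G.adjMatrix ℝ ^ (2 * k - 2)) x x := by
        apply Finset.sum_le_sum; intro x _
        apply mul_le_mul_of_nonneg_right _ (powA_nonneg G _ x x)
        rw [sq_diag_deg]
        exact_mod_cast Nat.cast_le.mpr (G.degree_le_maxDegree x)
    _ = (G.maxDegree : ℝ) * Matrix.trace (G.adjMatrix ℝ ^ (2 * k - 2)) := by
        rw [← Finset.mul_sum]; rfl

lemma trace_pow_bound (hk : 2 ≤ k) :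
    Matrix.trace (G.adjMatrix ℝ ^ (2 * k - 2)) ^ k ≤
      (Fintype.card V : ℝ) * Matrix.trace (G.adjMatrix ℝ ^ (2 * k)) ^ (k - 1) := by
  set ψ : ℕ → ℝ := fun j => Matrix.trace (G.adjMatrix ℝ ^ (2 * j)) with hψ
  have h0 : ∀ j, 0 ≤ ψ j := fun j => trace_pow_nonneg G _
  have hlc : ∀ j, 1 ≤ j → ψ j ^ 2 ≤ ψ (j - 1) * ψ (j + 1) := by
    intro j hj
    have e1 : 2 * j = (j - 1) + (j + 1) := by omega
    have e2 : 2 * (j - 1) = (j - 1) + (j - 1) := by omega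
    have e3 : 2 * (j + 1) = (j + 1) + (j + 1) := by omega
    simp only [hψ, e1, e2, e3]
    exact trace_cs G (j - 1) (j + 1)
  have := seq_pow ψ h0 hlc (k - 1)
  simp only [hψ] at this
  have e1 : k - 1 + 1 = k := by omega
  have e2 : 2 * (k - 1) = 2 * k - 2 := by omega
  rw [e1, e2] at this
  have e3 : (2:ℕ) * 0 = 0 := rfl
  rw [e3, pow_zero, Matrix.trace_one] at this
  simpa using this

section Colour

variable {K : Type*} [DecidableEq K] (c : Sym2 V → K)

/-- matrix of the matching of colour κ -/
def Bm (κ : K) : Matrix V V ℝ :=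
  Matrix.of (fun x y => if G.Adj x y ∧ c s(x, y) = κ then 1 else 0)

@[simp] lemma Bm_apply (κ : K) (x y : V) :
    Bm G c κ x y = if G.Adj x y ∧ c s(x, y) = κ then 1 else 0 := rfl

lemma Bm_transpose (κ : K) : (Bm G c κ)ᵀ = Bm G c κ := by
  ext x y
  rw [Matrix.transpose_apply, Bm_apply, Bm_apply]
  congr 1
  rw [eq_iff_iff]
  constructor
  · rintro ⟨h1, h2⟩; exact ⟨h1.symm, by rwa [Sym2.eq_swap]⟩
  · rintro ⟨h1, h2⟩; exact ⟨h1.symm, by rwa [Sym2.eq_swap]⟩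

/-- finite set of colours in use -/
def CS : Finset K := Finset.image c Finset.univ

lemma frob (M N : Matrix V V ℝ) : Matrix.trace (Mᵀ * N) = ∑ i, ∑ j, M i j * N i j := by
  unfold Matrix.trace
  rw [Finset.sum_comm]
  apply Finset.sum_congr rfl
  intro i _
  rw [Matrix.diag]
  rw [Matrix.mul_apply]
  apply Finset.sum_congr rfl
  intro j _
  rw [Matrix.transpose_apply]

lemma inner_id (κ : K) (p q r s : ℕ) :
    Matrix.trace (Bm G c κ * (G.adjMatrix ℝ ^ (p + q)) * Bm G c κ * (G.adjMatrix ℝ ^ (s + r))) =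
      ∑ i, ∑ j, (G.adjMatrix ℝ ^ p * Bm G c κ * G.adjMatrix ℝ ^ r) i j *
        (G.adjMatrix ℝ ^ q * Bm G c κ * G.adjMatrix ℝ ^ s) i j := by
  rw [← frob]
  have ht : (G.adjMatrix ℝ ^ p * Bm G c κ * G.adjMatrix ℝ ^ r)ᵀ =
      G.adjMatrix ℝ ^ r * Bm G c κ * G.adjMatrix ℝ ^ p := by
    rw [Matrix.transpose_mul, Matrix.transpose_mul, Matrix.transpose_pow, Matrix.transpose_pow,
      transpose_adjMatrix, Bm_transpose, Matrix.mul_assoc]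
  rw [ht]
  have e1 : G.adjMatrix ℝ ^ r * Bm G c κ * G.adjMatrix ℝ ^ p * (G.adjMatrix ℝ ^ q * Bm G c κ * G.adjMatrix ℝ ^ s)
      = G.adjMatrix ℝ ^ r * (Bm G c κ * (G.adjMatrix ℝ ^ (p + q)) * Bm G c κ * G.adjMatrix ℝ ^ s) := by
    rw [pow_add (G.adjMatrix ℝ) p q]; noncomm_ring
  rw [e1, Matrix.trace_mul_comm (G.adjMatrix ℝ ^ r)]
  have e2 : Bm G c κ * G.adjMatrix ℝ ^ (p + q) * Bm G c κ * G.adjMatrix ℝ ^ s * G.adjMatrix ℝ ^ r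
      = Bm G c κ * G.adjMatrix ℝ ^ (p + q) * Bm G c κ * (G.adjMatrix ℝ ^ (s + r)) := by
    rw [pow_add (G.adjMatrix ℝ) s r]; noncomm_ring
  rw [e2]

variable (k : ℕ)

/-- the colour-pair quantity -/
noncomputable def gφ (l : ℕ) : ℝ :=
  ∑ κ ∈ CS c, Matrix.trace (Bm G c κ * (G.adjMatrix ℝ ^ l) * Bm G c κ *
    (G.adjMatrix ℝ ^ (2 * k - 2 - l)))

lemma gφ_as_inner (p q : ℕ) (hp : p ≤ k - 1) (hq : q ≤ k - 1) (hk : 2 ≤ k) :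
    gφ G c k (p + q) = ∑ κ ∈ CS c, ∑ i, ∑ j,
      (G.adjMatrix ℝ ^ p * Bm G c κ * G.adjMatrix ℝ ^ (k - 1 - p)) i j *
      (G.adjMatrix ℝ ^ q * Bm G c κ * G.adjMatrix ℝ ^ (k - 1 - q)) i j := by
  unfold gφ
  have e : 2 * k - 2 - (p + q) = (k - 1 - q) + (k - 1 - p) := by omega
  rw [e]
  apply Finset.sum_congr rfl
  intro κ _
  exact inner_id G c κ p q (k - 1 - p) (k - 1 - q)

lemma gφ_even_nonneg (p : ℕ) (hp : p ≤ k - 1) (hk : 2 ≤ k) : 0 ≤ gφ G c k (p + p) := by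
  rw [gφ_as_inner G c k p p hp hp hk]
  apply Finset.sum_nonneg; intro κ _
  apply Finset.sum_nonneg; intro i _
  apply Finset.sum_nonneg; intro j _
  exact mul_self_nonneg _

lemma gφ_cs (p q : ℕ) (hp : p ≤ k - 1) (hq : q ≤ k - 1) (hk : 2 ≤ k) :
    gφ G c k (p + q) ^ 2 ≤ gφ G c k (p + p) * gφ G c k (q + q) := by
  rw [gφ_as_inner G c k p q hp hq hk, gφ_as_inner G c k p p hp hp hk,
    gφ_as_inner G c k q q hq hq hk]
  -- flatten triple sums
  have flat : ∀ (F : K → V → V → ℝ),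
      (∑ κ ∈ CS c, ∑ i, ∑ j, F κ i j) =
        ∑ t ∈ (CS c) ×ˢ ((Finset.univ : Finset V) ×ˢ (Finset.univ : Finset V)),
          F t.1 t.2.1 t.2.2 := by
    intro F
    rw [Finset.sum_product]
    apply Finset.sum_congr rfl
    intro κ _
    rw [Finset.sum_product]
  rw [flat, flat, flat]
  have h := Finset.sum_mul_sq_le_sq_mul_sq
    ((CS c) ×ˢ ((Finset.univ : Finset V) ×ˢ (Finset.univ : Finset V)))
    (fun t => (G.adjMatrix ℝ ^ p * Bm G c t.1 * G.adjMatrix ℝ ^ (k - 1 - p)) t.2.1 t.2.2)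
    (fun t => (G.adjMatrix ℝ ^ q * Bm G c t.1 * G.adjMatrix ℝ ^ (k - 1 - q)) t.2.1 t.2.2)
  calc (∑ t ∈ (CS c) ×ˢ (Finset.univ ×ˢ Finset.univ),
        (G.adjMatrix ℝ ^ p * Bm G c t.1 * G.adjMatrix ℝ ^ (k - 1 - p)) t.2.1 t.2.2 *
        (G.adjMatrix ℝ ^ q * Bm G c t.1 * G.adjMatrix ℝ ^ (k - 1 - q)) t.2.1 t.2.2) ^ 2
      ≤ _ := h
    _ = _ := by simp only [pow_two]

lemma colour_sum_BB (hproper : ∀ u v w : V, G.Adj u v → G.Adj u w → v ≠ w →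
      c s(u, v) ≠ c s(u, w)) (u v : V) :
    (∑ κ ∈ CS c, (Bm G c κ * Bm G c κ)) u v = if u = v then (G.degree u : ℝ) else 0 := by
  rw [Matrix.sum_apply]
  have step1 : ∀ κ ∈ CS c, (Bm G c κ * Bm G c κ) u v =
      ∑ z, (if (G.Adj u z ∧ c s(u, z) = κ) ∧ (G.Adj z v ∧ c s(z, v) = κ) then (1:ℝ) else 0) := by
    intro κ _
    rw [Matrix.mul_apply]
    apply Finset.sum_congr rfl
    intro z _
    rw [Bm_apply, Bm_apply, ite_zero_mul_ite_zero]
    norm_num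
  rw [Finset.sum_congr rfl step1, Finset.sum_comm]
  have step2 : ∀ z : V, (∑ κ ∈ CS c,
      (if (G.Adj u z ∧ c s(u, z) = κ) ∧ (G.Adj z v ∧ c s(z, v) = κ) then (1:ℝ) else 0)) =
      if G.Adj u z ∧ G.Adj z v ∧ c s(u, z) = c s(z, v) then 1 else 0 := by
    intro z
    by_cases h1 : G.Adj u z
    · by_cases h2 : G.Adj z v
      · by_cases h3 : c s(u, z) = c s(z, v)
        · rw [if_pos ⟨h1, h2, h3⟩]
          rw [Finset.sum_eq_single (c s(u, z))]
          · rw [if_pos ⟨⟨h1, rfl⟩, ⟨h2, h3.symm⟩⟩]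
          · intro κ _ hκ
            rw [if_neg]; rintro ⟨⟨_, h⟩, _⟩; exact hκ h.symm
          · intro habs
            exact absurd (Finset.mem_image_of_mem c (Finset.mem_univ s(u, z))) habs
        · rw [if_neg (by rintro ⟨_, _, h⟩; exact h3 h)]
          apply Finset.sum_eq_zero; intro κ _
          rw [if_neg]; rintro ⟨⟨_, ha⟩, ⟨_, hb⟩⟩; exact h3 (ha.trans hb.symm)
      · rw [if_neg (by rintro ⟨_, h, _⟩; exact h2 h)]
        apply Finset.sum_eq_zero; intro κ _
        rw [if_neg]; rintro ⟨_, ⟨h, _⟩⟩; exact h2 h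
    · rw [if_neg (by rintro ⟨h, _, _⟩; exact h1 h)]
      apply Finset.sum_eq_zero; intro κ _
      rw [if_neg]; rintro ⟨⟨h, _⟩, _⟩; exact h1 h
  rw [Finset.sum_congr rfl (fun z _ => step2 z)]
  by_cases huv : u = v
  · subst huv
    rw [if_pos rfl]
    have hdeg : (G.degree u : ℝ) = ∑ z, (if G.Adj u z then (1:ℝ) else 0) := by
      rw [Finset.sum_boole]
      congr 1
      rw [SimpleGraph.degree, SimpleGraph.neighborFinset_eq_filter]
    rw [hdeg]
    apply Finset.sum_congr rfl
    intro z _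
    by_cases h : G.Adj u z
    · rw [if_pos h, if_pos ⟨h, h.symm, by rw [Sym2.eq_swap]⟩]
    · rw [if_neg h, if_neg (by rintro ⟨ha, _, _⟩; exact h ha)]
  · rw [if_neg huv]
    apply Finset.sum_eq_zero
    intro z _
    rw [if_neg]
    rintro ⟨h1, h2, h3⟩
    have := hproper z u v h1.symm h2 huv
    rw [Sym2.eq_swap] at h3
    exact this h3

lemma gφ_zero_le (hk : 2 ≤ k)
    (hproper : ∀ u v w : V, G.Adj u v → G.Adj u w → v ≠ w → c s(u, v) ≠ c s(u, w)) :
    gφ G c k 0 ≤ (G.maxDegree : ℝ) * Matrix.trace (G.adjMatrix ℝ ^ (2 * k - 2)) := by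
  unfold gφ
  have e0 : ∀ κ, Bm G c κ * (G.adjMatrix ℝ ^ 0) * Bm G c κ * (G.adjMatrix ℝ ^ (2 * k - 2 - 0)) =
      (Bm G c κ * Bm G c κ) * (G.adjMatrix ℝ ^ (2 * k - 2)) := by
    intro κ; rw [pow_zero, Matrix.mul_one, Nat.sub_zero, Matrix.mul_assoc]
  simp_rw [e0]
  rw [← Matrix.trace_sum]
  rw [← Finset.sum_mul]
  have expand : Matrix.trace ((∑ κ ∈ CS c, Bm G c κ * Bm G c κ) * G.adjMatrix ℝ ^ (2 * k - 2)) =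
      ∑ u, ∑ v, (∑ κ ∈ CS c, (Bm G c κ * Bm G c κ)) u v * (G.adjMatrix ℝ ^ (2 * k - 2)) v u := by
    unfold Matrix.trace
    apply Finset.sum_congr rfl
    intro u _
    rw [Matrix.diag, Matrix.mul_apply]
  rw [expand]
  have collapse : ∀ u : V, (∑ v, (∑ κ ∈ CS c, (Bm G c κ * Bm G c κ)) u v *
      (G.adjMatrix ℝ ^ (2 * k - 2)) v u) = (G.degree u : ℝ) * (G.adjMatrix ℝ ^ (2 * k - 2)) u u := by
    intro u
    rw [Finset.sum_eq_single u]
    · rw [colour_sum_BB G c hproper u u, if_pos rfl]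
    · intro v _ hvu
      rw [colour_sum_BB G c hproper u v, if_neg (Ne.symm hvu), zero_mul]
    · intro h; exact absurd (Finset.mem_univ u) h
  rw [Finset.sum_congr rfl (fun u _ => collapse u)]
  unfold Matrix.trace
  rw [Finset.mul_sum]
  apply Finset.sum_le_sum
  intro u _
  rw [Matrix.diag]
  apply mul_le_mul_of_nonneg_right _ (powA_nonneg G _ u u)
  exact_mod_cast Nat.cast_le.mpr (G.degree_le_maxDegree u)

lemma gφ_end (hk : 2 ≤ k) : gφ G c k (2 * k - 2) = gφ G c k 0 := by
  unfold gφ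
  apply Finset.sum_congr rfl
  intro κ _
  simp only [Nat.sub_self, Nat.sub_zero, pow_zero, Matrix.mul_one]
  rw [show Bm G c κ * G.adjMatrix ℝ ^ (2 * k - 2) * Bm G c κ =
      Bm G c κ * (G.adjMatrix ℝ ^ (2 * k - 2) * Bm G c κ) by rw [Matrix.mul_assoc]]
  rw [Matrix.trace_mul_comm]
  rw [show G.adjMatrix ℝ ^ (2 * k - 2) * Bm G c κ * Bm G c κ =
      G.adjMatrix ℝ ^ (2 * k - 2) * (Bm G c κ * Bm G c κ) by rw [Matrix.mul_assoc]]
  rw [Matrix.trace_mul_comm]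

lemma colour_class_bound (hk : 2 ≤ k)
    (hproper : ∀ u v w : V, G.Adj u v → G.Adj u w → v ≠ w → c s(u, v) ≠ c s(u, w))
    (l : ℕ) (hl : l ≤ 2 * k - 2) :
    gφ G c k l ≤ (G.maxDegree : ℝ) * Matrix.trace (G.adjMatrix ℝ ^ (2 * k - 2)) := by
  set D := (G.maxDegree : ℝ) * Matrix.trace (G.adjMatrix ℝ ^ (2 * k - 2)) with hD
  have hDn : 0 ≤ D := mul_nonneg (Nat.cast_nonneg _) (trace_pow_nonneg G _)
  set φ : ℕ → ℝ := fun j => gφ G c k (2 * j) with hφ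
  have hφ0 : ∀ j, j ≤ k - 1 → 0 ≤ φ j := by
    intro j hj
    have := gφ_even_nonneg G c k j hj hk
    simpa [hφ, two_mul] using this
  have hφlc : ∀ j, 1 ≤ j → j < k - 1 → φ j ^ 2 ≤ φ (j - 1) * φ (j + 1) := by
    intro j hj1 hj2
    have := gφ_cs G c k (j - 1) (j + 1) (by omega) (by omega) hk
    have e1 : (j - 1) + (j + 1) = 2 * j := by omega
    have e2 : (j - 1) + (j - 1) = 2 * (j - 1) := by omega
    have e3 : (j + 1) + (j + 1) = 2 * (j + 1) := by omega
    rw [e1, e2, e3] at this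
    exact this
  have hmax : ∀ j, j ≤ k - 1 → φ j ≤ D := by
    intro j hj
    have := seq_max φ (k - 1) hφ0 hφlc j hj
    have hend : φ (k - 1) = φ 0 := by
      simp only [hφ]
      rw [show 2 * (k - 1) = 2 * k - 2 by omega]
      rw [gφ_end G c k hk]
    rw [hend, max_self] at this
    have h0D : φ 0 ≤ D := by
      simp only [hφ]
      rw [mul_zero]
      exact gφ_zero_le G c k hk hproper
    linarith
  rcases Nat.even_or_odd l with ⟨e, he⟩ | ⟨e, he⟩
  · have : φ e ≤ D := hmax e (by omega)
    simpa [hφ, show 2 * e = l by omega] using this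
  · -- l = 2e+1 odd, l ≤ 2k-3
    have hcs := gφ_cs G c k e (e + 1) (by omega) (by omega) hk
    have he1 : e + (e + 1) = l := by omega
    rw [he1] at hcs
    have hb1 : gφ G c k (e + e) ≤ D := by
      have := hmax e (by omega); simpa [hφ, two_mul] using this
    have hb2 : gφ G c k ((e + 1) + (e + 1)) ≤ D := by
      have := hmax (e + 1) (by omega); simpa [hφ, two_mul] using this
    have hn1 : 0 ≤ gφ G c k (e + e) := by
      have := gφ_even_nonneg G c k e (by omega) hk; simpa using this
    have hn2 : 0 ≤ gφ G c k ((e + 1) + (e + 1)) := by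
      have := gφ_even_nonneg G c k (e + 1) (by omega) hk; simpa using this
    nlinarith [hcs, hb1, hb2, hn1, hn2, hDn]

end Colour

section Count

lemma cons_mk_zero {n : ℕ} (v : V) (g : Fin n → V) (h : 0 < n + 1) :
    (Fin.cons v g : Fin (n + 1) → V) ⟨0, h⟩ = v := rfl

lemma cons_mk_succ {n : ℕ} (v : V) (g : Fin n → V) (j : ℕ) (h : j + 1 < n + 1) :
    (Fin.cons v g : Fin (n + 1) → V) ⟨j + 1, h⟩ = g ⟨j, by omega⟩ := by
  rw [← Fin.succ_mk, Fin.cons_succ]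

lemma sum_pi_succ (m : ℕ) (F : (Fin (m + 1) → V) → ℝ) :
    (∑ g : Fin (m + 1) → V, F g) = ∑ v : V, ∑ g' : Fin m → V, F (Fin.cons v g') := by
  have h := Fintype.sum_equiv (Fin.consEquiv (fun _ : Fin (m + 1) => V))
    (fun p => F (Fin.cons p.1 p.2)) F (fun p => rfl)
  rw [← h, Fintype.sum_prod_type]

/-- weight of a chain x → g 0 → ... → g (m-1) → z -/
def chain : (m : ℕ) → V → (Fin m → V) → V → ℝ
  | 0, x, _, z => G.adjMatrix ℝ x z
  | m + 1, x, g, z => G.adjMatrix ℝ x (g 0) * chain m (g 0) (Fin.tail g) z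

lemma chain_cons (m : ℕ) (x v z : V) (g' : Fin m → V) :
    chain G (m + 1) x (Fin.cons v g') z = G.adjMatrix ℝ x v * chain G m v g' z := by
  simp only [chain, Fin.cons_zero, Fin.tail_cons]

lemma chain_sum : ∀ (m : ℕ) (x z : V), (∑ g : Fin m → V, chain G m x g z) =
    (G.adjMatrix ℝ ^ (m + 1)) x z := by
  intro m
  induction m with
  | zero =>
    intro x z
    rw [Fintype.sum_unique]
    simp [chain]
  | succ m ih =>
    intro x z
    rw [sum_pi_succ]
    have h1 : ∀ v : V, (∑ g' : Fin m → V, chain G (m + 1) x (Fin.cons v g') z) =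
        G.adjMatrix ℝ x v * (G.adjMatrix ℝ ^ (m + 1)) v z := by
      intro v
      rw [Finset.sum_congr rfl (fun g' _ => chain_cons G m x v z g'), ← Finset.mul_sum, ih v z]
    rw [Finset.sum_congr rfl (fun v _ => h1 v)]
    rw [pow_succ' (G.adjMatrix ℝ) (m + 1), Matrix.mul_apply]

lemma spl1 (m : ℕ) (x z : V) (Hf : V → ℝ) :
    (∑ g : Fin (m + 1) → V, chain G (m + 1) x g z * Hf (g 0)) =
      ∑ u, G.adjMatrix ℝ x u * Hf u * (G.adjMatrix ℝ ^ (m + 1)) u z := by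
  rw [sum_pi_succ]
  apply Finset.sum_congr rfl
  intro v _
  have hc : ∀ g' : Fin m → V, chain G (m + 1) x (Fin.cons v g') z * Hf ((Fin.cons v g' : Fin (m + 1) → V) 0) =
      (G.adjMatrix ℝ x v * Hf v) * chain G m v g' z := by
    intro g'
    rw [chain_cons, Fin.cons_zero]
    ring
  rw [Finset.sum_congr rfl (fun g' _ => hc g'), ← Finset.mul_sum, chain_sum]

lemma spl2 : ∀ (e M : ℕ) (hM : e + 2 ≤ M) (x z : V) (Hf : V → V → ℝ),
    (∑ g : Fin M → V, chain G M x g z * Hf (g ⟨e, by omega⟩) (g ⟨e + 1, by omega⟩)) =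
      ∑ u, ∑ v, (G.adjMatrix ℝ ^ (e + 1)) x u * Hf u v * G.adjMatrix ℝ u v *
        (G.adjMatrix ℝ ^ (M - e - 1)) v z := by
  intro e
  induction e with
  | zero =>
    intro M hM x z Hf
    obtain ⟨m, rfl⟩ : ∃ m, M = m + 2 := ⟨M - 2, by omega⟩
    rw [sum_pi_succ]
    have h1 : ∀ u : V, (∑ g' : Fin (m + 1) → V,
        chain G (m + 2) x (Fin.cons u g') z *
          Hf ((Fin.cons u g' : Fin (m + 2) → V) ⟨0, by omega⟩) ((Fin.cons u g' : Fin (m + 2) → V) ⟨0 + 1, by omega⟩)) =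
        G.adjMatrix ℝ x u * ∑ v, G.adjMatrix ℝ u v * Hf u v * (G.adjMatrix ℝ ^ (m + 1)) v z := by
      intro u
      have hc : ∀ g' : Fin (m + 1) → V,
          chain G (m + 2) x (Fin.cons u g') z *
            Hf ((Fin.cons u g' : Fin (m + 2) → V) ⟨0, by omega⟩) ((Fin.cons u g' : Fin (m + 2) → V) ⟨0 + 1, by omega⟩) =
          G.adjMatrix ℝ x u * (chain G (m + 1) u g' z * Hf u (g' 0)) := by
        intro g'
        rw [chain_cons, cons_mk_zero, cons_mk_succ]
        simp only [Fin.mk_zero]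
        ring
      rw [Finset.sum_congr rfl (fun g' _ => hc g'), ← Finset.mul_sum, spl1]
    rw [Finset.sum_congr rfl (fun u _ => h1 u)]
    apply Finset.sum_congr rfl
    intro u _
    rw [Finset.mul_sum]
    apply Finset.sum_congr rfl
    intro v _
    have he : m + 2 - 0 - 1 = m + 1 := by omega
    rw [he, pow_one]
    ring
  | succ e ih =>
    intro M hM x z Hf
    obtain ⟨M', rfl⟩ : ∃ M', M = M' + 1 := ⟨M - 1, by omega⟩
    have hM' : e + 2 ≤ M' := by omega
    rw [sum_pi_succ]
    have h1 : ∀ y : V, (∑ g' : Fin M' → V,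
        chain G (M' + 1) x (Fin.cons y g') z *
          Hf ((Fin.cons y g' : Fin (M' + 1) → V) ⟨e + 1, by omega⟩) ((Fin.cons y g' : Fin (M' + 1) → V) ⟨e + 1 + 1, by omega⟩)) =
        G.adjMatrix ℝ x y * ∑ u, ∑ v, (G.adjMatrix ℝ ^ (e + 1)) y u * Hf u v *
          G.adjMatrix ℝ u v * (G.adjMatrix ℝ ^ (M' - e - 1)) v z := by
      intro y
      have hc : ∀ g' : Fin M' → V,
          chain G (M' + 1) x (Fin.cons y g') z *
            Hf ((Fin.cons y g' : Fin (M' + 1) → V) ⟨e + 1, by omega⟩) ((Fin.cons y g' : Fin (M' + 1) → V) ⟨e + 1 + 1, by omega⟩) =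
          G.adjMatrix ℝ x y * (chain G M' y g' z *
            Hf (g' ⟨e, by omega⟩) (g' ⟨e + 1, by omega⟩)) := by
        intro g'
        obtain ⟨m', rfl⟩ : ∃ m', M' = m' + 1 := ⟨M' - 1, by omega⟩
        rw [chain_cons, cons_mk_succ, cons_mk_succ]
        ring
      rw [Finset.sum_congr rfl (fun g' _ => hc g'), ← Finset.mul_sum, ih M' hM' y z Hf]
    rw [Finset.sum_congr rfl (fun y _ => h1 y)]
    have hswap : ∑ y, G.adjMatrix ℝ x y * (∑ u, ∑ v, (G.adjMatrix ℝ ^ (e + 1)) y u * Hf u v *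
          G.adjMatrix ℝ u v * (G.adjMatrix ℝ ^ (M' - e - 1)) v z) =
        ∑ u, ∑ v, (∑ y, G.adjMatrix ℝ x y * (G.adjMatrix ℝ ^ (e + 1)) y u) * Hf u v *
          G.adjMatrix ℝ u v * (G.adjMatrix ℝ ^ (M' - e - 1)) v z := by
      simp_rw [Finset.mul_sum, Finset.sum_mul]
      rw [Finset.sum_comm]
      apply Finset.sum_congr rfl; intro u _
      rw [Finset.sum_comm]
      apply Finset.sum_congr rfl; intro v _
      apply Finset.sum_congr rfl; intro y _
      ring
    rw [hswap]
    apply Finset.sum_congr rfl; intro u _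
    apply Finset.sum_congr rfl; intro v _
    have hee : (M' + 1) - (e + 1) - 1 = M' - e - 1 := by omega
    rw [hee, pow_succ' (G.adjMatrix ℝ) (e + 1), Matrix.mul_apply]

lemma spl3 : ∀ (d M : ℕ) (hd : 1 ≤ d) (hM : d + 1 ≤ M) (x z : V) (Gf : V → V → V → ℝ),
    (∑ g : Fin M → V, chain G M x g z *
        Gf (g ⟨0, by omega⟩) (g ⟨d - 1, by omega⟩) (g ⟨d, by omega⟩)) =
      ∑ y, ∑ u, ∑ v, G.adjMatrix ℝ x y * (G.adjMatrix ℝ ^ (d - 1)) y u * Gf y u v *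
        G.adjMatrix ℝ u v * (G.adjMatrix ℝ ^ (M - d)) v z := by
  intro d M hd hM x z Gf
  rcases Nat.lt_or_ge d 2 with hd2 | hd2
  · -- d = 1
    obtain rfl : d = 1 := by omega
    obtain ⟨m, rfl⟩ : ∃ m, M = m + 2 := ⟨M - 2, by omega⟩
    rw [sum_pi_succ]
    have h1 : ∀ y : V, (∑ g' : Fin (m + 1) → V,
        chain G (m + 2) x (Fin.cons y g') z *
          Gf ((Fin.cons y g' : Fin (m + 2) → V) ⟨0, by omega⟩) ((Fin.cons y g' : Fin (m + 2) → V) ⟨1 - 1, by omega⟩)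
            ((Fin.cons y g' : Fin (m + 2) → V) ⟨1, by omega⟩)) =
        G.adjMatrix ℝ x y * ∑ v, G.adjMatrix ℝ y v * Gf y y v * (G.adjMatrix ℝ ^ (m + 1)) v z := by
      intro y
      have hc : ∀ g' : Fin (m + 1) → V,
          chain G (m + 2) x (Fin.cons y g') z *
            Gf ((Fin.cons y g' : Fin (m + 2) → V) ⟨0, by omega⟩) ((Fin.cons y g' : Fin (m + 2) → V) ⟨1 - 1, by omega⟩)
              ((Fin.cons y g' : Fin (m + 2) → V) ⟨1, by omega⟩) =
          G.adjMatrix ℝ x y * (chain G (m + 1) y g' z * Gf y y (g' 0)) := by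
        intro g'
        have e1 : (⟨1 - 1, by omega⟩ : Fin (m + 2)) = ⟨0, by omega⟩ := rfl
        rw [e1, chain_cons, cons_mk_zero]
        have e2 : (⟨1, by omega⟩ : Fin (m + 2)) = ⟨0 + 1, by omega⟩ := rfl
        rw [e2, cons_mk_succ]
        simp only [Fin.mk_zero]
        ring
      rw [Finset.sum_congr rfl (fun g' _ => hc g'), ← Finset.mul_sum,
        spl1 G (m) y z (fun v => Gf y y v)]
    rw [Finset.sum_congr rfl (fun y _ => h1 y)]
    apply Finset.sum_congr rfl
    intro y _
    -- RHS for d = 1 : collapse u via A^0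
    have hrhs : ∑ u, ∑ v, G.adjMatrix ℝ x y * (G.adjMatrix ℝ ^ (1 - 1)) y u * Gf y u v *
        G.adjMatrix ℝ u v * (G.adjMatrix ℝ ^ (m + 2 - 1)) v z =
        G.adjMatrix ℝ x y * ∑ v, G.adjMatrix ℝ y v * Gf y y v * (G.adjMatrix ℝ ^ (m + 1)) v z := by
      have e4 : (1 : ℕ) - 1 = 0 := rfl
      have e5 : m + 2 - 1 = m + 1 := by omega
      rw [e4, e5]
      rw [Finset.sum_eq_single y]
      · rw [pow_zero, Matrix.one_apply_eq, Finset.mul_sum]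
        apply Finset.sum_congr rfl; intro v _; ring
      · intro u _ hu
        rw [pow_zero, Matrix.one_apply_ne (Ne.symm hu)]
        apply Finset.sum_eq_zero; intro v _; ring
      · intro h; exact absurd (Finset.mem_univ y) h
    rw [hrhs]
  · -- d ≥ 2
    obtain ⟨e, rfl⟩ : ∃ e, d = e + 2 := ⟨d - 2, by omega⟩
    obtain ⟨M', rfl⟩ : ∃ M', M = M' + 1 := ⟨M - 1, by omega⟩
    have hM' : e + 2 ≤ M' := by omega
    rw [sum_pi_succ]
    have h1 : ∀ y : V, (∑ g' : Fin M' → V,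
        chain G (M' + 1) x (Fin.cons y g') z *
          Gf ((Fin.cons y g' : Fin (M' + 1) → V) ⟨0, by omega⟩) ((Fin.cons y g' : Fin (M' + 1) → V) ⟨e + 2 - 1, by omega⟩)
            ((Fin.cons y g' : Fin (M' + 1) → V) ⟨e + 2, by omega⟩)) =
        G.adjMatrix ℝ x y * ∑ u, ∑ v, (G.adjMatrix ℝ ^ (e + 1)) y u * Gf y u v *
          G.adjMatrix ℝ u v * (G.adjMatrix ℝ ^ (M' - e - 1)) v z := by
      intro y
      have hc : ∀ g' : Fin M' → V,
          chain G (M' + 1) x (Fin.cons y g') z *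
            Gf ((Fin.cons y g' : Fin (M' + 1) → V) ⟨0, by omega⟩) ((Fin.cons y g' : Fin (M' + 1) → V) ⟨e + 2 - 1, by omega⟩)
              ((Fin.cons y g' : Fin (M' + 1) → V) ⟨e + 2, by omega⟩) =
          G.adjMatrix ℝ x y * (chain G M' y g' z *
            (fun u v => Gf y u v) (g' ⟨e, by omega⟩) (g' ⟨e + 1, by omega⟩)) := by
        intro g'
        obtain ⟨m', rfl⟩ : ∃ m', M' = m' + 1 := ⟨M' - 1, by omega⟩
        have e1 : (⟨e + 2 - 1, by omega⟩ : Fin (m' + 1 + 1)) = ⟨e + 1, by omega⟩ := rfl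
        rw [e1, chain_cons, cons_mk_zero, cons_mk_succ, cons_mk_succ]
        ring
      rw [Finset.sum_congr rfl (fun g' _ => hc g'), ← Finset.mul_sum,
        spl2 G e M' hM' y z (fun u v => Gf y u v)]
    rw [Finset.sum_congr rfl (fun y _ => h1 y)]
    apply Finset.sum_congr rfl
    intro y _
    rw [Finset.mul_sum]
    apply Finset.sum_congr rfl
    intro u _
    rw [Finset.mul_sum]
    apply Finset.sum_congr rfl
    intro v _
    have e2 : e + 2 - 1 = e + 1 := by omega
    have e3 : M' + 1 - (e + 2) = M' - e - 1 := by omega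
    rw [e2, e3]
    ring

end Count

section Cyc

variable (N : ℕ) [NeZero N]

/-- weight of a cyclic map -/
noncomputable def cycW (f : ZMod N → V) : ℝ :=
  ∏ i : ZMod N, G.adjMatrix ℝ (f i) (f (i + 1))

lemma zmod_prod (t : ZMod N → ℝ) :
    ∏ i : ZMod N, t i = ∏ j ∈ Finset.range N, t (j : ZMod N) := by
  apply (Finset.prod_bij (fun (j : ℕ) (_ : j ∈ Finset.range N) => ((j : ZMod N))) ?_ ?_ ?_ ?_).symm
  · intro j _; exact Finset.mem_univ _
  · intro j1 h1 j2 h2 hc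
    have h := congrArg ZMod.val hc
    rwa [ZMod.val_natCast_of_lt (Finset.mem_range.mp h1),
      ZMod.val_natCast_of_lt (Finset.mem_range.mp h2)] at h
  · intro i _
    exact ⟨i.val, Finset.mem_range.mpr (ZMod.val_lt i), ZMod.natCast_rightInverse i⟩
  · intro j _; rfl

/-- parametrisation of cyclic maps by the base vertex and the interior chain -/
def E0 : (V × (Fin (N - 1) → V)) ≃ (ZMod N → V) where
  toFun p i := if h : i.val = 0 then p.1 else p.2 ⟨i.val - 1, by have := ZMod.val_lt i; omega⟩
  invFun f := (f 0, fun t => f ((t.val + 1 : ℕ) : ZMod N))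
  left_inv p := by
    have hN0 : N ≠ 0 := NeZero.ne N
    ext
    · show (if h : (0 : ZMod N).val = 0 then p.1 else _) = p.1
      rw [dif_pos ZMod.val_zero]
    · rename_i t
      show (if h : ((t.val + 1 : ℕ) : ZMod N).val = 0 then p.1 else _) = p.2 t
      have htlt : t.val + 1 < N := by have := t.isLt; omega
      have hv : ((t.val + 1 : ℕ) : ZMod N).val = t.val + 1 := ZMod.val_natCast_of_lt htlt
      rw [dif_neg (by omega)]
      exact congrArg p.2 (Fin.ext (by
        show ((t.val + 1 : ℕ) : ZMod N).val - 1 = t.val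
        rw [hv]
        omega))
  right_inv f := by
    have hN0 : N ≠ 0 := NeZero.ne N
    funext i
    by_cases h : i.val = 0
    · show (if h : i.val = 0 then f 0 else _) = f i
      rw [dif_pos h]
      have : i = 0 := (ZMod.val_eq_zero i).mp h
      rw [this]
    · show (if h : i.val = 0 then f 0 else f (((⟨i.val - 1, _⟩ : Fin (N - 1)).val + 1 : ℕ) : ZMod N)) = f i
      rw [dif_neg h]
      congr 1
      show (((i.val - 1) + 1 : ℕ) : ZMod N) = i
      rw [show i.val - 1 + 1 = i.val by omega]
      exact ZMod.natCast_rightInverse i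

lemma E0_cast (x : V) (g : Fin (N - 1) → V) (j : ℕ) (hj : j < N) :
    E0 N (x, g) (j : ZMod N) = if h : j = 0 then x else g ⟨j - 1, by omega⟩ := by
  show (if h : ((j : ZMod N)).val = 0 then x else g ⟨((j : ZMod N)).val - 1, _⟩) = _
  have hv : ((j : ZMod N)).val = j := ZMod.val_natCast_of_lt hj
  by_cases h : j = 0
  · rw [dif_pos (by omega), dif_pos h]
  · rw [dif_neg (by omega), dif_neg h]
    congr 1
    apply Fin.ext
    simp only [hv]

lemma E0_cast_self (x : V) (g : Fin (N - 1) → V) :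
    E0 N (x, g) ((N : ℕ) : ZMod N) = x := by
  rw [ZMod.natCast_self]
  show (if h : (0 : ZMod N).val = 0 then x else _) = x
  rw [dif_pos ZMod.val_zero]

/-- vertex along a closed chain -/
def cv (m : ℕ) (x : V) (g : Fin m → V) (z : V) (j : ℕ) : V :=
  if j = 0 then x else if h : j - 1 < m then g ⟨j - 1, h⟩ else z

lemma chain_prod : ∀ (m : ℕ) (x z : V) (g : Fin m → V),
    chain G m x g z = ∏ j ∈ Finset.range (m + 1),
      G.adjMatrix ℝ (cv m x g z j) (cv m x g z (j + 1)) := by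
  intro m
  induction m with
  | zero =>
    intro x z g
    rw [Finset.prod_range_one]
    show G.adjMatrix ℝ x z = _
    simp [cv]
  | succ m ih =>
    intro x z g
    rw [Finset.prod_range_succ']
    have hc : chain G (m + 1) x g z =
        G.adjMatrix ℝ x (g 0) * chain G m (g 0) (Fin.tail g) z := rfl
    rw [hc, ih]
    have h0 : cv (m + 1) x g z 0 = x := rfl
    have h1 : cv (m + 1) x g z (0 + 1) = g 0 := by
      show (if 1 = 0 then x else if h : 1 - 1 < m + 1 then g ⟨1 - 1, h⟩ else z) = g 0
      rw [if_neg (by omega), dif_pos (by omega : 1 - 1 < m + 1)]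
      congr 1
    have hsh : ∀ j, cv (m + 1) x g z (j + 1) = cv m (g 0) (Fin.tail g) z j := by
      intro j
      rcases Nat.eq_zero_or_pos j with rfl | hj
      · rw [h1]
        show g 0 = if 0 = 0 then g 0 else _
        rw [if_pos rfl]
      · show (if j + 1 = 0 then x else if h : j + 1 - 1 < m + 1 then g ⟨j + 1 - 1, h⟩ else z) =
          if j = 0 then g 0 else if h : j - 1 < m then Fin.tail g ⟨j - 1, h⟩ else z
        rw [if_neg (by omega), if_neg (by omega)]
        by_cases hb : j - 1 < m
        · rw [dif_pos (show j + 1 - 1 < m + 1 by omega), dif_pos hb]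
          show g _ = g (Fin.succ ⟨j - 1, hb⟩)
          congr 1
          apply Fin.ext
          show j + 1 - 1 = (j - 1) + 1
          omega
        · rw [dif_neg (by omega), dif_neg hb]
    calc G.adjMatrix ℝ x (g 0) *
          ∏ j ∈ Finset.range (m + 1),
            G.adjMatrix ℝ (cv m (g 0) (Fin.tail g) z j) (cv m (g 0) (Fin.tail g) z (j + 1))
        = (∏ j ∈ Finset.range (m + 1),
            G.adjMatrix ℝ (cv (m + 1) x g z (j + 1)) (cv (m + 1) x g z (j + 1 + 1))) *
            G.adjMatrix ℝ (cv (m + 1) x g z 0) (cv (m + 1) x g z (0 + 1)) := by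
          rw [h0, h1]
          rw [mul_comm]
          congr 1
          apply Finset.prod_congr rfl
          intro j _
          rw [hsh j, hsh (j + 1)]
      _ = _ := rfl

lemma E0_cv (hN : 1 ≤ N) (x : V) (g : Fin (N - 1) → V) (j : ℕ) (hj : j ≤ N) :
    E0 N (x, g) (j : ZMod N) = cv (N - 1) x g x j := by
  rcases Nat.lt_or_ge j N with hlt | hge
  · rw [E0_cast N x g j hlt]
    by_cases h : j = 0
    · rw [dif_pos h]
      show _ = if j = 0 then x else _
      rw [if_pos h]
    · rw [dif_neg h]
      show _ = if j = 0 then x else if h' : j - 1 < N - 1 then g ⟨j - 1, h'⟩ else x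
      rw [if_neg h, dif_pos (by omega)]
  · have hje : N = j := by omega
    subst hje
    rw [E0_cast_self]
    show x = if N = 0 then x else if h' : N - 1 < N - 1 then g ⟨N - 1, h'⟩ else x
    rw [if_neg (by omega), dif_neg (by omega)]

lemma cycW_E0 (hN : 1 ≤ N) (x : V) (g : Fin (N - 1) → V) :
    cycW G N (E0 N (x, g)) = chain G (N - 1) x g x := by
  unfold cycW
  rw [zmod_prod]
  rw [chain_prod, show N - 1 + 1 = N by omega]
  apply Finset.prod_congr rfl
  intro j hj
  have hjN : j < N := Finset.mem_range.mp hj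
  rw [show ((j : ZMod N) + 1) = ((j + 1 : ℕ) : ZMod N) by push_cast; ring]
  rw [E0_cv N hN x g j (by omega), E0_cv N hN x g (j + 1) (by omega)]

lemma cyc_master (hN : 4 ≤ N) (d : ℕ) (hd1 : 1 ≤ d) (hd2 : d ≤ N - 2)
    (Gf : V → V → V → V → ℝ) :
    (∑ f : ZMod N → V, cycW G N f * Gf (f 0) (f 1) (f (d : ZMod N)) (f ((d : ZMod N) + 1))) =
      ∑ x, ∑ y, ∑ u, ∑ v, G.adjMatrix ℝ x y * (G.adjMatrix ℝ ^ (d - 1)) y u * Gf x y u v *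
        G.adjMatrix ℝ u v * (G.adjMatrix ℝ ^ (N - 1 - d)) v x := by
  have h1 := Fintype.sum_equiv (E0 N)
    (fun p => cycW G N (E0 N p) * Gf (E0 N p 0) (E0 N p 1) (E0 N p (d : ZMod N))
      (E0 N p ((d : ZMod N) + 1)))
    (fun f => cycW G N f * Gf (f 0) (f 1) (f (d : ZMod N)) (f ((d : ZMod N) + 1)))
    (fun p => rfl)
  rw [← h1, Fintype.sum_prod_type]
  have h2 : ∀ (x : V) (g : Fin (N - 1) → V),
      cycW G N (E0 N (x, g)) * Gf (E0 N (x, g) 0) (E0 N (x, g) 1) (E0 N (x, g) (d : ZMod N))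
        (E0 N (x, g) ((d : ZMod N) + 1)) =
      chain G (N - 1) x g x * Gf x (g ⟨0, by omega⟩) (g ⟨d - 1, by omega⟩) (g ⟨d, by omega⟩) := by
    intro x g
    rw [cycW_E0 G N (by omega) x g]
    congr 1
    have m0 : E0 N (x, g) 0 = x := by
      rw [show (0 : ZMod N) = ((0 : ℕ) : ZMod N) by push_cast; ring]
      rw [E0_cast N x g 0 (by omega), dif_pos rfl]
    have m1 : E0 N (x, g) 1 = g ⟨0, by omega⟩ := by
      rw [show (1 : ZMod N) = ((1 : ℕ) : ZMod N) by push_cast; ring]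
      rw [E0_cast N x g 1 (by omega), dif_neg (by omega)]
    have m2 : E0 N (x, g) (d : ZMod N) = g ⟨d - 1, by omega⟩ := by
      rw [E0_cast N x g d (by omega), dif_neg (by omega)]
    have m3 : E0 N (x, g) ((d : ZMod N) + 1) = g ⟨d, by omega⟩ := by
      rw [show ((d : ZMod N) + 1) = ((d + 1 : ℕ) : ZMod N) by push_cast; ring]
      rw [E0_cast N x g (d + 1) (by omega), dif_neg (by omega)]
      congr 1
    rw [m0, m1, m2, m3]
  rw [Finset.sum_congr rfl (fun x _ => Finset.sum_congr rfl (fun g _ => h2 x g))]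
  apply Finset.sum_congr rfl
  intro x _
  have h3 := spl3 G d (N - 1) hd1 (by omega) x x (fun y u v => Gf x y u v)
  rw [show N - 1 - d = (N - 1) - d by omega]
  exact h3

end Cyc

section Classes

variable {K : Type*} [DecidableEq K] (c : Sym2 V → K) (k N : ℕ) [NeZero N]

lemma hom_count (hN : 4 ≤ N) :
    (∑ f : ZMod N → V, cycW G N f) = Matrix.trace (G.adjMatrix ℝ ^ N) := by
  have h := cyc_master G N hN 1 le_rfl (by omega) (fun _ _ _ _ => (1:ℝ))
  simp only [mul_one] at h
  rw [h]
  unfold Matrix.trace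
  apply Finset.sum_congr rfl; intro x _
  rw [Matrix.diag]
  have hsplit : (G.adjMatrix ℝ ^ N) = G.adjMatrix ℝ * (G.adjMatrix ℝ * G.adjMatrix ℝ ^ (N - 2)) := by
    rw [← pow_succ', ← pow_succ']
    congr 1
    omega
  have e : (G.adjMatrix ℝ ^ N) x x =
      ∑ y, G.adjMatrix ℝ x y * ∑ v, G.adjMatrix ℝ y v * (G.adjMatrix ℝ ^ (N - 2)) v x := by
    rw [hsplit, Matrix.mul_apply]
    apply Finset.sum_congr rfl; intro y _
    rw [Matrix.mul_apply, Finset.mul_sum]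
  rw [e]
  apply Finset.sum_congr rfl; intro y _
  rw [Finset.mul_sum]
  have e2 : ∀ u : V, (∑ v, G.adjMatrix ℝ x y * (G.adjMatrix ℝ ^ (1 - 1)) y u *
      G.adjMatrix ℝ u v * (G.adjMatrix ℝ ^ (N - 1 - 1)) v x) =
      (if y = u then (1:ℝ) else 0) * ∑ v, G.adjMatrix ℝ x y * G.adjMatrix ℝ u v *
        (G.adjMatrix ℝ ^ (N - 2)) v x := by
    intro u
    rw [show (1:ℕ) - 1 = 0 by omega, pow_zero, Finset.mul_sum]
    apply Finset.sum_congr rfl; intro v _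
    rw [Matrix.one_apply, show N - 1 - 1 = N - 2 by omega]
    ring
  rw [Finset.sum_congr rfl (fun u _ => e2 u)]
  rw [Finset.sum_eq_single y]
  · rw [if_pos rfl, one_mul]
    apply Finset.sum_congr rfl; intro v _
    ring
  · intro u _ hu
    rw [if_neg (Ne.symm hu), zero_mul]
  · intro h'; exact absurd (Finset.mem_univ y) h'

lemma vclass (hN : 4 ≤ N) (d : ℕ) (hd1 : 1 ≤ d) (hd2 : d ≤ N - 2) :
    (∑ f : ZMod N → V, cycW G N f * (if f 0 = f (d : ZMod N) then (1:ℝ) else 0)) =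
      ∑ x, (G.adjMatrix ℝ ^ d) x x * (G.adjMatrix ℝ ^ (N - d)) x x := by
  have h := cyc_master G N hN d hd1 hd2 (fun x _ u _ => if x = u then (1:ℝ) else 0)
  rw [h]
  apply Finset.sum_congr rfl; intro x _
  have swap1 : ∀ y : V, (∑ u, ∑ v, G.adjMatrix ℝ x y * (G.adjMatrix ℝ ^ (d - 1)) y u *
      (if x = u then (1:ℝ) else 0) * G.adjMatrix ℝ u v * (G.adjMatrix ℝ ^ (N - 1 - d)) v x) =
      ∑ v, G.adjMatrix ℝ x y * (G.adjMatrix ℝ ^ (d - 1)) y x *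
        G.adjMatrix ℝ x v * (G.adjMatrix ℝ ^ (N - 1 - d)) v x := by
    intro y
    rw [Finset.sum_eq_single x]
    · apply Finset.sum_congr rfl; intro v _
      rw [if_pos rfl]
      ring
    · intro u _ hu
      apply Finset.sum_eq_zero; intro v _
      rw [if_neg (Ne.symm hu)]
      ring
    · intro h'; exact absurd (Finset.mem_univ x) h'
  rw [Finset.sum_congr rfl (fun y _ => swap1 y)]
  have ed : (G.adjMatrix ℝ ^ d) x x = ∑ y, G.adjMatrix ℝ x y * (G.adjMatrix ℝ ^ (d - 1)) y x := by
    have hp : G.adjMatrix ℝ ^ d = G.adjMatrix ℝ * G.adjMatrix ℝ ^ (d - 1) := by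
      rw [← pow_succ']
      congr 1
      omega
    rw [hp, Matrix.mul_apply]
  have end' : (G.adjMatrix ℝ ^ (N - d)) x x =
      ∑ v, G.adjMatrix ℝ x v * (G.adjMatrix ℝ ^ (N - 1 - d)) v x := by
    have hp : G.adjMatrix ℝ ^ (N - d) = G.adjMatrix ℝ * G.adjMatrix ℝ ^ (N - 1 - d) := by
      rw [← pow_succ']
      congr 1
      omega
    rw [hp, Matrix.mul_apply]
  rw [ed, end', Finset.sum_mul_sum]
  apply Finset.sum_congr rfl; intro y _
  apply Finset.sum_congr rfl; intro v _
  ring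

lemma trace4 (P Q R S : Matrix V V ℝ) :
    Matrix.trace (P * Q * R * S) = ∑ x, ∑ y, ∑ u, ∑ v, P x y * Q y u * R u v * S v x := by
  unfold Matrix.trace
  apply Finset.sum_congr rfl; intro x _
  rw [Matrix.diag, Matrix.mul_apply]
  have e1 : ∀ v, (P * Q * R) x v * S v x = ∑ u, ∑ y, P x y * Q y u * R u v * S v x := by
    intro v
    rw [Matrix.mul_apply, Finset.sum_mul]
    apply Finset.sum_congr rfl; intro u _
    rw [Matrix.mul_apply, Finset.sum_mul, Finset.sum_mul]
  rw [Finset.sum_congr rfl (fun v _ => e1 v)]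
  calc ∑ v : V, ∑ u : V, ∑ y : V, P x y * Q y u * R u v * S v x
      = ∑ u : V, ∑ v : V, ∑ y : V, P x y * Q y u * R u v * S v x := Finset.sum_comm
    _ = ∑ u : V, ∑ y : V, ∑ v : V, P x y * Q y u * R u v * S v x :=
        Finset.sum_congr rfl (fun u _ => Finset.sum_comm)
    _ = ∑ y : V, ∑ u : V, ∑ v : V, P x y * Q y u * R u v * S v x := Finset.sum_comm

lemma Bm_pair_sum (x y u v : V) :
    (∑ κ ∈ CS c, Bm G c κ x y * Bm G c κ u v) =
      G.adjMatrix ℝ x y * G.adjMatrix ℝ u v *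
        (if c s(x, y) = c s(u, v) then (1:ℝ) else 0) := by
  by_cases h1 : G.Adj x y
  · by_cases h2 : G.Adj u v
    · rw [adjMatrix_apply, adjMatrix_apply, if_pos h1, if_pos h2, one_mul, one_mul]
      by_cases h3 : c s(x, y) = c s(u, v)
      · rw [if_pos h3]
        rw [Finset.sum_eq_single (c s(x, y))]
        · rw [Bm_apply, Bm_apply, if_pos ⟨h1, rfl⟩, if_pos ⟨h2, h3.symm⟩]
          norm_num
        · intro κ _ hκ
          rw [Bm_apply, if_neg (by rintro ⟨_, h⟩; exact hκ h.symm), zero_mul]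
        · intro habs
          exact absurd (Finset.mem_image_of_mem c (Finset.mem_univ s(x, y))) habs
      · rw [if_neg h3]
        apply Finset.sum_eq_zero; intro κ _
        rw [Bm_apply, Bm_apply]
        by_cases hx : c s(x, y) = κ
        · rw [if_pos ⟨h1, hx⟩, if_neg (by rintro ⟨_, hy⟩; exact h3 (hx.trans hy.symm)), mul_zero]
        · rw [if_neg (by rintro ⟨_, hy⟩; exact hx hy), zero_mul]
    · rw [adjMatrix_apply G u v, if_neg h2]
      rw [mul_zero, zero_mul]
      apply Finset.sum_eq_zero; intro κ _
      rw [Bm_apply G c κ u v, if_neg (by rintro ⟨h, _⟩; exact h2 h), mul_zero]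
  · rw [adjMatrix_apply G x y, if_neg h1, zero_mul, zero_mul]
    apply Finset.sum_eq_zero; intro κ _
    rw [Bm_apply G c κ x y, if_neg (by rintro ⟨h, _⟩; exact h1 h), zero_mul]

lemma col_split (l r : ℕ) (x y u v : V) :
    G.adjMatrix ℝ x y * (G.adjMatrix ℝ ^ l) y u *
      (if c s(x, y) = c s(u, v) then (1:ℝ) else 0) * G.adjMatrix ℝ u v *
      (G.adjMatrix ℝ ^ r) v x =
    ∑ κ ∈ CS c, Bm G c κ x y * (G.adjMatrix ℝ ^ l) y u * Bm G c κ u v *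
      (G.adjMatrix ℝ ^ r) v x := by
  have e : ∀ κ, Bm G c κ x y * (G.adjMatrix ℝ ^ l) y u * Bm G c κ u v *
      (G.adjMatrix ℝ ^ r) v x =
      (Bm G c κ x y * Bm G c κ u v) * ((G.adjMatrix ℝ ^ l) y u * (G.adjMatrix ℝ ^ r) v x) := by
    intro κ; ring
  rw [Finset.sum_congr rfl (fun κ _ => e κ), ← Finset.sum_mul, Bm_pair_sum]
  ring

lemma cclass (hN : 4 ≤ N) (hNk : N = 2 * k) (d : ℕ) (hd1 : 1 ≤ d) (hd2 : d ≤ N - 2) :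
    (∑ f : ZMod N → V, cycW G N f *
        (if c s(f 0, f 1) = c s(f (d : ZMod N), f ((d : ZMod N) + 1)) then (1:ℝ) else 0)) =
      gφ G c k (d - 1) := by
  have h := cyc_master G N hN d hd1 hd2
    (fun x y u v => if c s(x, y) = c s(u, v) then (1:ℝ) else 0)
  rw [h]
  unfold gφ
  have e1 : ∀ x y u v : V,
      G.adjMatrix ℝ x y * (G.adjMatrix ℝ ^ (d - 1)) y u *
        (if c s(x, y) = c s(u, v) then (1:ℝ) else 0) * G.adjMatrix ℝ u v *
        (G.adjMatrix ℝ ^ (N - 1 - d)) v x =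
      ∑ κ ∈ CS c, Bm G c κ x y * (G.adjMatrix ℝ ^ (d - 1)) y u * Bm G c κ u v *
        (G.adjMatrix ℝ ^ (N - 1 - d)) v x := col_split G c (d - 1) (N - 1 - d)
  calc ∑ x, ∑ y, ∑ u, ∑ v, G.adjMatrix ℝ x y * (G.adjMatrix ℝ ^ (d - 1)) y u *
        (if c s(x, y) = c s(u, v) then (1:ℝ) else 0) * G.adjMatrix ℝ u v *
        (G.adjMatrix ℝ ^ (N - 1 - d)) v x
      = ∑ x, ∑ y, ∑ u, ∑ v, ∑ κ ∈ CS c,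
          Bm G c κ x y * (G.adjMatrix ℝ ^ (d - 1)) y u * Bm G c κ u v *
          (G.adjMatrix ℝ ^ (N - 1 - d)) v x := by
        apply Finset.sum_congr rfl; intro x _
        apply Finset.sum_congr rfl; intro y _
        apply Finset.sum_congr rfl; intro u _
        apply Finset.sum_congr rfl; intro v _
        exact e1 x y u v
    _ = ∑ κ ∈ CS c, ∑ x, ∑ y, ∑ u, ∑ v,
          Bm G c κ x y * (G.adjMatrix ℝ ^ (d - 1)) y u * Bm G c κ u v *
          (G.adjMatrix ℝ ^ (N - 1 - d)) v x := by
        have s4 : ∀ (x y u : V), (∑ v, ∑ κ ∈ CS c,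
            Bm G c κ x y * (G.adjMatrix ℝ ^ (d - 1)) y u * Bm G c κ u v *
            (G.adjMatrix ℝ ^ (N - 1 - d)) v x) = ∑ κ ∈ CS c, ∑ v,
            Bm G c κ x y * (G.adjMatrix ℝ ^ (d - 1)) y u * Bm G c κ u v *
            (G.adjMatrix ℝ ^ (N - 1 - d)) v x := fun x y u => Finset.sum_comm
        simp_rw [s4]
        have s3 : ∀ (x y : V), (∑ u, ∑ κ ∈ CS c, ∑ v,
            Bm G c κ x y * (G.adjMatrix ℝ ^ (d - 1)) y u * Bm G c κ u v *
            (G.adjMatrix ℝ ^ (N - 1 - d)) v x) = ∑ κ ∈ CS c, ∑ u, ∑ v,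
            Bm G c κ x y * (G.adjMatrix ℝ ^ (d - 1)) y u * Bm G c κ u v *
            (G.adjMatrix ℝ ^ (N - 1 - d)) v x := fun x y => Finset.sum_comm
        simp_rw [s3]
        have s2 : ∀ (x : V), (∑ y, ∑ κ ∈ CS c, ∑ u, ∑ v,
            Bm G c κ x y * (G.adjMatrix ℝ ^ (d - 1)) y u * Bm G c κ u v *
            (G.adjMatrix ℝ ^ (N - 1 - d)) v x) = ∑ κ ∈ CS c, ∑ y, ∑ u, ∑ v,
            Bm G c κ x y * (G.adjMatrix ℝ ^ (d - 1)) y u * Bm G c κ u v *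
            (G.adjMatrix ℝ ^ (N - 1 - d)) v x := fun x => Finset.sum_comm
        simp_rw [s2]
        exact Finset.sum_comm
    _ = ∑ κ ∈ CS c, Matrix.trace (Bm G c κ * (G.adjMatrix ℝ ^ (d - 1)) * Bm G c κ *
          (G.adjMatrix ℝ ^ (2 * k - 2 - (d - 1)))) := by
        apply Finset.sum_congr rfl; intro κ _
        rw [trace4, show 2 * k - 2 - (d - 1) = N - 1 - d by omega]
    _ = _ := rfl

end Classes

section Rot

variable {K : Type*} [DecidableEq K] (c : Sym2 V → K) (k N : ℕ) [NeZero N]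

def rotE (i : ZMod N) : (ZMod N → V) ≃ (ZMod N → V) where
  toFun f := fun t => f (t + i)
  invFun f := fun t => f (t - i)
  left_inv f := by funext t; simp [sub_add_cancel]
  right_inv f := by funext t; simp [add_sub_cancel]

lemma cycW_rot (i : ZMod N) (f : ZMod N → V) :
    cycW G N (fun t => f (t + i)) = cycW G N f := by
  unfold cycW
  apply Fintype.prod_equiv (Equiv.addRight i)
  intro t
  show G.adjMatrix ℝ (f (t + i)) (f (t + 1 + i)) = G.adjMatrix ℝ (f (t + i)) (f (t + i + 1))
  rw [show t + 1 + i = t + i + 1 by ring]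

lemma val_pos_of_ne {i j : ZMod N} (hij : i ≠ j) : 1 ≤ (j - i).val := by
  by_contra h
  have h0 : (j - i).val = 0 := by omega
  have := (ZMod.val_eq_zero (j - i)).mp h0
  exact hij (by linear_combination -this)

lemma pairV_core (hN : 4 ≤ N) (hNk : N = 2 * k) (hk : 2 ≤ k) (i j : ZMod N) (hij : i ≠ j)
    (hd : (j - i).val ≤ N - 2) :
    (∑ f : ZMod N → V, cycW G N f * (if f i = f j then (1:ℝ) else 0)) ≤
      (G.maxDegree : ℝ) * Matrix.trace (G.adjMatrix ℝ ^ (2 * k - 2)) := by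
  set d := (j - i).val with hdd
  have hd1 : 1 ≤ d := val_pos_of_ne N hij
  have hcast : ((d : ℕ) : ZMod N) = j - i := ZMod.natCast_rightInverse (j - i)
  have hrot : (∑ f : ZMod N → V, cycW G N f * (if f i = f j then (1:ℝ) else 0)) =
      ∑ f : ZMod N → V, cycW G N f * (if f 0 = f (d : ZMod N) then (1:ℝ) else 0) := by
    apply Fintype.sum_equiv (rotE N i)
    intro f
    show cycW G N f * (if f i = f j then (1:ℝ) else 0) =
      cycW G N (fun t => f (t + i)) *
        (if f (0 + i) = f ((d : ZMod N) + i) then (1:ℝ) else 0)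
    have h0 : f (0 + i) = f i := by rw [zero_add]
    have h1 : f ((d : ZMod N) + i) = f j := by rw [hcast]; congr 1; ring
    rw [cycW_rot, h0, h1]
  rw [hrot, vclass G N hN d hd1 hd]
  have := vertex_class_bound G k hk d hd1 (by omega)
  rw [show N - d = 2 * k - d by omega]
  exact this

lemma indV_symm (i j : ZMod N) (f : ZMod N → V) :
    (if f i = f j then (1:ℝ) else 0) = (if f j = f i then (1:ℝ) else 0) := by
  by_cases h : f i = f j
  · rw [if_pos h, if_pos h.symm]
  · rw [if_neg h, if_neg (fun h' => h h'.symm)]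

lemma val_other (hN : 4 ≤ N) (i j : ZMod N) (hij : i ≠ j) (hd : ¬ (j - i).val ≤ N - 2) :
    (i - j).val ≤ N - 2 := by
  have h1 : (j - i).val < N := ZMod.val_lt _
  have h2 : (j - i).val = N - 1 := by omega
  have hne : j - i ≠ 0 := fun h => hij (by linear_combination -h)
  haveI : NeZero (j - i) := ⟨hne⟩
  have h3 : (-(j - i)).val = N - (j - i).val := ZMod.val_neg_of_ne_zero (j - i)
  have h4 : i - j = -(j - i) := by ring
  rw [h4, h3, h2]
  omega

lemma pairV_bound (hN : 4 ≤ N) (hNk : N = 2 * k) (hk : 2 ≤ k) (i j : ZMod N) (hij : i ≠ j) :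
    (∑ f : ZMod N → V, cycW G N f * (if f i = f j then (1:ℝ) else 0)) ≤
      (G.maxDegree : ℝ) * Matrix.trace (G.adjMatrix ℝ ^ (2 * k - 2)) := by
  by_cases hd : (j - i).val ≤ N - 2
  · exact pairV_core G k N hN hNk hk i j hij hd
  · have := pairV_core G k N hN hNk hk j i hij.symm (val_other N hN i j hij hd)
    calc (∑ f : ZMod N → V, cycW G N f * (if f i = f j then (1:ℝ) else 0))
        = ∑ f : ZMod N → V, cycW G N f * (if f j = f i then (1:ℝ) else 0) := by
          apply Finset.sum_congr rfl; intro f _; rw [indV_symm]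
      _ ≤ _ := this

lemma indC_symm (i j : ZMod N) (f : ZMod N → V) :
    (if c s(f i, f (i + 1)) = c s(f j, f (j + 1)) then (1:ℝ) else 0) =
      (if c s(f j, f (j + 1)) = c s(f i, f (i + 1)) then (1:ℝ) else 0) := by
  by_cases h : c s(f i, f (i + 1)) = c s(f j, f (j + 1))
  · rw [if_pos h, if_pos h.symm]
  · rw [if_neg h, if_neg (fun h' => h h'.symm)]

lemma pairC_core (hN : 4 ≤ N) (hNk : N = 2 * k) (hk : 2 ≤ k)
    (hproper : ∀ u v w : V, G.Adj u v → G.Adj u w → v ≠ w → c s(u, v) ≠ c s(u, w))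
    (i j : ZMod N) (hij : i ≠ j) (hd : (j - i).val ≤ N - 2) :
    (∑ f : ZMod N → V, cycW G N f *
        (if c s(f i, f (i + 1)) = c s(f j, f (j + 1)) then (1:ℝ) else 0)) ≤
      (G.maxDegree : ℝ) * Matrix.trace (G.adjMatrix ℝ ^ (2 * k - 2)) := by
  set d := (j - i).val with hdd
  have hd1 : 1 ≤ d := val_pos_of_ne N hij
  have hcast : ((d : ℕ) : ZMod N) = j - i := ZMod.natCast_rightInverse (j - i)
  have hrot : (∑ f : ZMod N → V, cycW G N f *
      (if c s(f i, f (i + 1)) = c s(f j, f (j + 1)) then (1:ℝ) else 0)) =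
      ∑ f : ZMod N → V, cycW G N f *
        (if c s(f 0, f 1) = c s(f (d : ZMod N), f ((d : ZMod N) + 1)) then (1:ℝ) else 0) := by
    apply Fintype.sum_equiv (rotE N i)
    intro f
    show cycW G N f * (if c s(f i, f (i + 1)) = c s(f j, f (j + 1)) then (1:ℝ) else 0) =
      cycW G N (fun t => f (t + i)) *
        (if c s(f (0 + i), f (1 + i)) = c s(f ((d : ZMod N) + i), f ((d : ZMod N) + 1 + i))
          then (1:ℝ) else 0)
    have h0 : f (0 + i) = f i := by rw [zero_add]
    have h1 : f (1 + i) = f (i + 1) := by rw [show (1 : ZMod N) + i = i + 1 by ring]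
    have h2 : f ((d : ZMod N) + i) = f j := by rw [hcast]; congr 1; ring
    have h3 : f ((d : ZMod N) + 1 + i) = f (j + 1) := by rw [hcast]; congr 1; ring
    rw [cycW_rot, h0, h1, h2, h3]
  rw [hrot, cclass G c k N hN hNk d hd1 hd]
  exact colour_class_bound G c k hk hproper (d - 1) (by omega)

lemma pairC_bound (hN : 4 ≤ N) (hNk : N = 2 * k) (hk : 2 ≤ k)
    (hproper : ∀ u v w : V, G.Adj u v → G.Adj u w → v ≠ w → c s(u, v) ≠ c s(u, w))
    (i j : ZMod N) (hij : i ≠ j) :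
    (∑ f : ZMod N → V, cycW G N f *
        (if c s(f i, f (i + 1)) = c s(f j, f (j + 1)) then (1:ℝ) else 0)) ≤
      (G.maxDegree : ℝ) * Matrix.trace (G.adjMatrix ℝ ^ (2 * k - 2)) := by
  by_cases hd : (j - i).val ≤ N - 2
  · exact pairC_core G c k N hN hNk hk hproper i j hij hd
  · have := pairC_core G c k N hN hNk hk hproper j i hij.symm (val_other N hN i j hij hd)
    calc (∑ f : ZMod N → V, cycW G N f *
          (if c s(f i, f (i + 1)) = c s(f j, f (j + 1)) then (1:ℝ) else 0))
        = ∑ f : ZMod N → V, cycW G N f *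
            (if c s(f j, f (j + 1)) = c s(f i, f (i + 1)) then (1:ℝ) else 0) := by
          apply Finset.sum_congr rfl; intro f _; rw [indC_symm]
      _ ≤ _ := this

lemma card_filter_to_sum (P : (ZMod N → V) → Prop) [DecidablePred P] :
    ((Finset.univ.filter
        (fun f : ZMod N → V => (∀ i, G.Adj (f i) (f (i + 1))) ∧ P f)).card : ℝ) =
      ∑ f : ZMod N → V, cycW G N f * (if P f then (1:ℝ) else 0) := by
  rw [Finset.card_filter]
  push_cast
  apply Finset.sum_congr rfl
  intro f _
  have hw : cycW G N f = if (∀ i, G.Adj (f i) (f (i + 1))) then (1:ℝ) else 0 := by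
    unfold cycW
    simp only [adjMatrix_apply]
    rw [Finset.prod_boole]
    congr 1
    simp
  rw [hw]
  by_cases h1 : ∀ i, G.Adj (f i) (f (i + 1)) <;> by_cases h2 : P f <;> simp [h1, h2]

end Rot

section Final

variable {K : Type*} [DecidableEq K] (c : Sym2 V → K) (k N : ℕ) [NeZero N]

lemma card_hom_eq (hN : 4 ≤ N) :
    ((Nat.card {f : ZMod N → V // ∀ i, G.Adj (f i) (f (i + 1))}) : ℝ) =
      Matrix.trace (G.adjMatrix ℝ ^ N) := by
  classical
  rw [Nat.card_eq_fintype_card, Fintype.card_subtype]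
  rw [Finset.card_filter]
  push_cast
  rw [← hom_count G N hN]
  apply Finset.sum_congr rfl; intro f _
  unfold cycW
  simp only [adjMatrix_apply]
  rw [Finset.prod_boole]
  congr 1
  simp

lemma card_bad_le (hN : 4 ≤ N) (hNk : N = 2 * k) (hk : 2 ≤ k)
    (hproper : ∀ u v w : V, G.Adj u v → G.Adj u w → v ≠ w → c s(u, v) ≠ c s(u, w)) :
    ((Nat.card {f : ZMod N → V // (∀ i, G.Adj (f i) (f (i + 1))) ∧
        ¬ (Function.Injective f ∧
            Function.Injective (fun i => c s(f i, f (i + 1))))}) : ℝ) ≤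
      (N : ℝ) ^ 2 * (2 * ((G.maxDegree : ℝ) * Matrix.trace (G.adjMatrix ℝ ^ (2 * k - 2)))) := by
  classical
  rw [Nat.card_eq_fintype_card, Fintype.card_subtype]
  set D2 := 2 * ((G.maxDegree : ℝ) * Matrix.trace (G.adjMatrix ℝ ^ (2 * k - 2))) with hD2
  have hD2n : 0 ≤ D2 := by
    rw [hD2]
    have := trace_pow_nonneg G (2 * k - 2)
    positivity
  set pairs := (Finset.univ ×ˢ Finset.univ).filter
    (fun p : ZMod N × ZMod N => p.1 ≠ p.2) with hpairs
  set T : ZMod N × ZMod N → Finset (ZMod N → V) := fun p =>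
    Finset.univ.filter (fun f : ZMod N → V => (∀ i, G.Adj (f i) (f (i + 1))) ∧
      (f p.1 = f p.2 ∨ c s(f p.1, f (p.1 + 1)) = c s(f p.2, f (p.2 + 1)))) with hT
  have hsub : Finset.univ.filter (fun f : ZMod N → V => (∀ i, G.Adj (f i) (f (i + 1))) ∧
      ¬ (Function.Injective f ∧ Function.Injective (fun i => c s(f i, f (i + 1))))) ⊆
      pairs.biUnion T := by
    intro f hf
    simp only [Finset.mem_filter, Finset.mem_univ, true_and] at hf
    obtain ⟨hhom, hbad⟩ := hf
    rw [not_and_or] at hbad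
    rcases hbad with hni | hnc
    · rw [Function.not_injective_iff] at hni
      obtain ⟨a, b, hab, hne⟩ := hni
      apply Finset.mem_biUnion.mpr
      refine ⟨(a, b), ?_, ?_⟩
      · simp only [hpairs, Finset.mem_filter, Finset.mem_product, Finset.mem_univ, true_and,
          and_true]
        exact hne
      · simp only [hT, Finset.mem_filter, Finset.mem_univ, true_and]
        exact ⟨hhom, Or.inl hab⟩
    · rw [Function.not_injective_iff] at hnc
      obtain ⟨a, b, hab, hne⟩ := hnc
      apply Finset.mem_biUnion.mpr
      refine ⟨(a, b), ?_, ?_⟩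
      · simp only [hpairs, Finset.mem_filter, Finset.mem_product, Finset.mem_univ, true_and,
          and_true]
        exact hne
      · simp only [hT, Finset.mem_filter, Finset.mem_univ, true_and]
        exact ⟨hhom, Or.inr hab⟩
  have hsplit : ∀ p ∈ pairs, ((T p).card : ℝ) ≤ D2 := by
    intro p hp
    have hpne : p.1 ≠ p.2 := by
      simp only [hpairs, Finset.mem_filter] at hp
      exact hp.2
    have hsub2 : T p ⊆
        (Finset.univ.filter (fun f : ZMod N → V => (∀ i, G.Adj (f i) (f (i + 1))) ∧
          f p.1 = f p.2)) ∪
        (Finset.univ.filter (fun f : ZMod N → V => (∀ i, G.Adj (f i) (f (i + 1))) ∧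
          c s(f p.1, f (p.1 + 1)) = c s(f p.2, f (p.2 + 1)))) := by
      intro f hf
      simp only [hT, Finset.mem_filter, Finset.mem_univ, true_and] at hf
      obtain ⟨hhom, hor⟩ := hf
      rcases hor with h | h
      · exact Finset.mem_union_left _ (Finset.mem_filter.mpr ⟨Finset.mem_univ _, hhom, h⟩)
      · exact Finset.mem_union_right _ (Finset.mem_filter.mpr ⟨Finset.mem_univ _, hhom, h⟩)
    have hcard : (T p).card ≤
        (Finset.univ.filter (fun f : ZMod N → V => (∀ i, G.Adj (f i) (f (i + 1))) ∧
          f p.1 = f p.2)).card +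
        (Finset.univ.filter (fun f : ZMod N → V => (∀ i, G.Adj (f i) (f (i + 1))) ∧
          c s(f p.1, f (p.1 + 1)) = c s(f p.2, f (p.2 + 1)))).card :=
      le_trans (Finset.card_le_card hsub2) (Finset.card_union_le _ _)
    have hV := pairV_bound G k N hN hNk hk p.1 p.2 hpne
    have hC := pairC_bound G c k N hN hNk hk hproper p.1 p.2 hpne
    rw [← card_filter_to_sum G N (fun f => f p.1 = f p.2)] at hV
    rw [← card_filter_to_sum G N
      (fun f => c s(f p.1, f (p.1 + 1)) = c s(f p.2, f (p.2 + 1)))] at hC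
    calc ((T p).card : ℝ)
        ≤ ((Finset.univ.filter (fun f : ZMod N → V => (∀ i, G.Adj (f i) (f (i + 1))) ∧
            f p.1 = f p.2)).card : ℝ) +
          ((Finset.univ.filter (fun f : ZMod N → V => (∀ i, G.Adj (f i) (f (i + 1))) ∧
            c s(f p.1, f (p.1 + 1)) = c s(f p.2, f (p.2 + 1)))).card : ℝ) := by
          exact_mod_cast hcard
      _ ≤ (G.maxDegree : ℝ) * Matrix.trace (G.adjMatrix ℝ ^ (2 * k - 2)) +
          (G.maxDegree : ℝ) * Matrix.trace (G.adjMatrix ℝ ^ (2 * k - 2)) :=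
        add_le_add hV hC
      _ = D2 := by rw [hD2]; ring
  calc ((Finset.univ.filter (fun f : ZMod N → V => (∀ i, G.Adj (f i) (f (i + 1))) ∧
        ¬ (Function.Injective f ∧
            Function.Injective (fun i => c s(f i, f (i + 1)))))).card : ℝ)
      ≤ ((pairs.biUnion T).card : ℝ) := by exact_mod_cast Finset.card_le_card hsub
    _ ≤ ((∑ p ∈ pairs, (T p).card : ℕ) : ℝ) := by exact_mod_cast Finset.card_biUnion_le
    _ = ∑ p ∈ pairs, ((T p).card : ℝ) := by push_cast; rfl
    _ ≤ ∑ p ∈ pairs, D2 := Finset.sum_le_sum hsplit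
    _ = (pairs.card : ℝ) * D2 := by rw [Finset.sum_const, nsmul_eq_mul]
    _ ≤ (N : ℝ) ^ 2 * D2 := by
        apply mul_le_mul_of_nonneg_right _ hD2n
        have h1 : pairs.card ≤ N * N := by
          calc pairs.card ≤ ((Finset.univ ×ˢ Finset.univ :
              Finset (ZMod N × ZMod N))).card := Finset.card_filter_le _ _
            _ = N * N := by
              rw [Finset.card_product]
              simp [Finset.card_univ, ZMod.card]
        calc (pairs.card : ℝ) ≤ ((N * N : ℕ) : ℝ) := by exact_mod_cast h1
          _ = (N : ℝ) ^ 2 := by push_cast; ring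

end Final

end Stmt13Dev


open Stmt13Dev in
/-- For `k ≥ 2` and a properly edge-coloured graph `G` on `n` vertices with maximum degree `Δ`,
the number of homomorphisms from the cycle `C_{2k}` to `G` which are not injective rainbow
embeddings is at most `64·k^{3/2}·Δ^{1/2}·n^{1/(2k)}·hom(C_{2k},G)^{1-1/(2k)}`. -/
theorem stmt_13 {V K : Type*} [Fintype V] (k : ℕ) (hk : 2 ≤ k)
    (G : SimpleGraph V) [DecidableRel G.Adj] (c : Sym2 V → K)
    (hproper : ∀ u v w : V, G.Adj u v → G.Adj u w → v ≠ w → c s(u, v) ≠ c s(u, w)) :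
    (Nat.card {f : ZMod (2 * k) → V //
        (∀ i, G.Adj (f i) (f (i + 1))) ∧
        ¬ (Function.Injective f ∧
            Function.Injective (fun i => c s(f i, f (i + 1))))} : ℝ) ≤
      64 * (k : ℝ) ^ ((3 : ℝ) / 2) * (G.maxDegree : ℝ) ^ ((1 : ℝ) / 2) *
        (Fintype.card V : ℝ) ^ ((1 : ℝ) / (2 * (k : ℝ))) *
        (Nat.card {f : ZMod (2 * k) → V // ∀ i, G.Adj (f i) (f (i + 1))} : ℝ) ^
          (1 - 1 / (2 * (k : ℝ))) := by
  classical
  haveI : NeZero (2 * k) := ⟨by omega⟩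
  have hN4 : 4 ≤ 2 * k := by omega
  set L : ℝ := (Nat.card {f : ZMod (2 * k) → V //
      (∀ i, G.Adj (f i) (f (i + 1))) ∧
      ¬ (Function.Injective f ∧
          Function.Injective (fun i => c s(f i, f (i + 1))))} : ℝ) with hL
  set Hc : ℝ := (Nat.card {f : ZMod (2 * k) → V // ∀ i, G.Adj (f i) (f (i + 1))} : ℝ) with hHc
  have hHeq : Hc = Matrix.trace (G.adjMatrix ℝ ^ (2 * k)) := by
    rw [hHc]; exact card_hom_eq G (2 * k) hN4
  set tr2 : ℝ := Matrix.trace (G.adjMatrix ℝ ^ (2 * k - 2)) with htr2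
  have hL0 : 0 ≤ L := by rw [hL]; exact Nat.cast_nonneg _
  have hD0 : (0:ℝ) ≤ (G.maxDegree : ℝ) := Nat.cast_nonneg _
  have hH0 : 0 ≤ Hc := by rw [hHc]; exact Nat.cast_nonneg _
  have htr0 : 0 ≤ tr2 := by rw [htr2]; exact trace_pow_nonneg G _
  have hn0 : (0:ℝ) ≤ (Fintype.card V : ℝ) := Nat.cast_nonneg _
  have hLH : L ≤ Hc := by
    rw [hL, hHc]
    have h := Nat.card_le_card_of_injective
      (f := fun x : {f : ZMod (2 * k) → V //
          (∀ i, G.Adj (f i) (f (i + 1))) ∧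
          ¬ (Function.Injective f ∧
              Function.Injective (fun i => c s(f i, f (i + 1))))} =>
        (⟨x.1, x.2.1⟩ : {f : ZMod (2 * k) → V // ∀ i, G.Adj (f i) (f (i + 1))}))
      (fun a b hab => by
        apply Subtype.ext
        have h2 := congrArg Subtype.val hab
        exact h2)
    exact_mod_cast h
  have hLB : L ≤ 8 * (k:ℝ)^2 * ((G.maxDegree : ℝ) * tr2) := by
    have h := card_bad_le G c k (2 * k) hN4 rfl hk hproper
    calc L ≤ ((2 * k : ℕ) : ℝ) ^ 2 * (2 * ((G.maxDegree : ℝ) * tr2)) := h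
      _ = 8 * (k:ℝ)^2 * ((G.maxDegree : ℝ) * tr2) := by push_cast; ring
  have htb : tr2 ^ k ≤ (Fintype.card V : ℝ) * Hc ^ (k - 1) := by
    have h := trace_pow_bound G k hk
    rw [← hHeq] at h
    exact h
  have key : L ^ (2 * k) ≤ 4096 ^ k * (k:ℝ) ^ (3 * k) * (G.maxDegree:ℝ) ^ k *
      (Fintype.card V : ℝ) * Hc ^ (2 * k - 1) := by
    have h2 : L ^ 2 ≤ Hc * (8 * (k:ℝ)^2 * ((G.maxDegree:ℝ) * tr2)) := by
      rw [sq]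
      exact mul_le_mul hLH hLB hL0 hH0
    have hpow : L ^ (2 * k) = (L ^ 2) ^ k := by rw [← pow_mul]
    rw [hpow]
    calc (L ^ 2) ^ k ≤ (Hc * (8 * (k:ℝ)^2 * ((G.maxDegree:ℝ) * tr2))) ^ k :=
        pow_le_pow_left₀ (sq_nonneg L) h2 k
      _ = (8 * (k:ℝ)^2)^k * (G.maxDegree:ℝ)^k * (Hc ^ k * tr2 ^ k) := by
          rw [mul_pow, mul_pow, mul_pow]; ring
      _ ≤ (8 * (k:ℝ)^2)^k * (G.maxDegree:ℝ)^k *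
          (Hc ^ k * ((Fintype.card V : ℝ) * Hc ^ (k-1))) := by
          apply mul_le_mul_of_nonneg_left _ (by positivity)
          apply mul_le_mul_of_nonneg_left htb (pow_nonneg hH0 _)
      _ = (8 * (k:ℝ)^2)^k * (G.maxDegree:ℝ)^k * (Fintype.card V : ℝ) *
          (Hc ^ k * Hc ^ (k-1)) := by ring
      _ = (8 * (k:ℝ)^2)^k * (G.maxDegree:ℝ)^k * (Fintype.card V : ℝ) * Hc ^ (2*k-1) := by
          rw [← pow_add, show k + (k-1) = 2*k - 1 by omega]
      _ ≤ 4096^k * (k:ℝ)^(3*k) * (G.maxDegree:ℝ)^k * (Fintype.card V : ℝ) * Hc ^ (2*k-1) := by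
          apply mul_le_mul_of_nonneg_right _ (pow_nonneg hH0 _)
          apply mul_le_mul_of_nonneg_right _ hn0
          apply mul_le_mul_of_nonneg_right _ (pow_nonneg hD0 _)
          have e1 : (4096:ℝ)^k * (k:ℝ)^(3*k) = ((4096:ℝ) * (k:ℝ)^3)^k := by
            rw [mul_pow, pow_mul]
          rw [e1]
          apply pow_le_pow_left₀ (by positivity)
          have hk1 : (1:ℝ) ≤ (k:ℝ) := by exact_mod_cast (by omega : 1 ≤ k)
          nlinarith [hk1]
  set R : ℝ := 64 * (k : ℝ) ^ ((3 : ℝ) / 2) * (G.maxDegree : ℝ) ^ ((1 : ℝ) / 2) *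
      (Fintype.card V : ℝ) ^ ((1 : ℝ) / (2 * (k : ℝ))) * Hc ^ (1 - 1 / (2 * (k : ℝ))) with hR
  have hR0 : 0 ≤ R := by
    rw [hR]
    positivity
  have hRpow : R ^ (2 * k) = 4096 ^ k * (k:ℝ) ^ (3 * k) * (G.maxDegree:ℝ) ^ k *
      (Fintype.card V : ℝ) * Hc ^ (2 * k - 1) := by
    have hfac : ∀ (x : ℝ), 0 ≤ x → ∀ (e : ℝ), (x ^ e) ^ (2 * k) = x ^ (e * ((2 * k : ℕ) : ℝ)) := by
      intro x hx e
      rw [← Real.rpow_natCast (x ^ e) (2 * k), ← Real.rpow_mul hx]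
    rw [hR]
    rw [mul_pow, mul_pow, mul_pow, mul_pow]
    rw [hfac _ (Nat.cast_nonneg k), hfac _ hD0, hfac _ hn0, hfac _ hH0]
    have hkR : ((2 * k : ℕ) : ℝ) = 2 * (k:ℝ) := by push_cast; ring
    have hkne : (k:ℝ) ≠ 0 := Nat.cast_ne_zero.mpr (by omega)
    have e1 : (3:ℝ)/2 * ((2*k : ℕ):ℝ) = ((3*k : ℕ) : ℝ) := by rw [hkR]; push_cast; ring
    have e2 : (1:ℝ)/2 * ((2*k : ℕ):ℝ) = ((k : ℕ):ℝ) := by rw [hkR]; push_cast; ring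
    have e3 : (1:ℝ)/(2 * (k:ℝ)) * ((2*k : ℕ):ℝ) = ((1 : ℕ):ℝ) := by
      rw [hkR]
      push_cast
      field_simp
      try ring
    have e4 : (1 - 1/(2 * (k:ℝ))) * ((2*k : ℕ):ℝ) = ((2*k - 1 : ℕ):ℝ) := by
      rw [hkR, Nat.cast_sub (by omega : 1 ≤ 2*k)]
      push_cast
      field_simp
      try ring
    rw [e1, e2, e3, e4]
    rw [Real.rpow_natCast, Real.rpow_natCast, Real.rpow_natCast, Real.rpow_natCast]
    rw [pow_one]
    rw [show (64:ℝ)^(2*k) = ((64:ℝ)^2)^k by rw [← pow_mul]]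
    norm_num
  have hfin : L ^ (2 * k) ≤ R ^ (2 * k) := by rw [hRpow]; exact key
  exact le_of_pow_le_pow_left₀ (by omega) hR0 hfin
end
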